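/- arXiv:math/9905117 — 11 statements merged into one kernel-verified Lean document; each statement's English description precedes it below -/
import Mathlib

section
/- For every Borel set H ⊆ 2^ω × 2^ω all of whose vertical sections (H)_x = {y : (x,y) ∈ H} are meager, there exists a sequence of Borel sets G_n ⊆ 2^ω × 2^ω such that every vertical section (G_n)_x is a closed nowhere dense subset of 2^ω and H ⊆ ⋃_n G_n. -/
/-!
Call a subset of `X × Y` *uniformly meagre* if it is covered by countably many Borel sets with
closed nowhere dense vertical sections, and say that it has the *uniform Baire property* if it
differs by a uniformly meagre set from a countable union `U` of rectangles `B × V` with `B`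
Borel and `V` open. Borel rectangles have this property because Borel subsets of `Y` have the
Baire property, and countable unions have it trivially. For the complement, let `U'` be the union
over the members `W` of a countable basis of the rectangles
`{x | x ∉ B for every rectangle B × V of U with V meeting W} × W`: its sections are the interiors
of the complements of the sections of `U`, so `Uᶜ \ U'` has frontiers of closed sets as sections.
Hence every Borel set has the uniform Baire property. If moreover its sections are meagre, then
so are the open sections of `U`, which are therefore empty by Baire's theorem.
-/

open Set Filter MeasureTheory TopologicalSpace Topology
open scoped symmDiff

variable {X Y : Type*}

def rectangleUnion (R : Set (Set X × Set Y)) : Set (X × Y) :=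
  ⋃ r ∈ R, r.1 ×ˢ r.2

@[simp]
lemma mem_rectangleUnion {R : Set (Set X × Set Y)} {p : X × Y} :
    p ∈ rectangleUnion R ↔ ∃ r ∈ R, p.1 ∈ r.1 ∧ p.2 ∈ r.2 := by
  simp only [rectangleUnion, mem_iUnion₂, mem_prod, exists_prop]

lemma measurableSet_rectangleUnion [MeasurableSpace X] [TopologicalSpace Y] [MeasurableSpace Y]
    [OpensMeasurableSpace Y] {R : Set (Set X × Set Y)}
    (hR : R.Countable) (hRm : ∀ r ∈ R, MeasurableSet r.1 ∧ IsOpen r.2) :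
    MeasurableSet (rectangleUnion R) :=
  .biUnion hR fun r hr => (hRm r hr).1.prod (hRm r hr).2.measurableSet

lemma isOpen_mk_preimage_rectangleUnion [TopologicalSpace Y] {R : Set (Set X × Set Y)}
    (hR : ∀ r ∈ R, IsOpen r.2) (x : X) : IsOpen (Prod.mk x ⁻¹' rectangleUnion R) := by
  have : Prod.mk x ⁻¹' rectangleUnion R = ⋃ r ∈ {r ∈ R | x ∈ r.1}, r.2 := by
    ext y
    simp [and_assoc]
  rw [this]
  exact isOpen_biUnion fun r hr => hR r hr.1

lemma subset_compl_mk_preimage_rectangleUnion_iff {R : Set (Set X × Set Y)} {x : X}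
    {w : Set Y} :
    w ⊆ (Prod.mk x ⁻¹' rectangleUnion R)ᶜ ↔ ∀ r ∈ R, (r.2 ∩ w).Nonempty → x ∉ r.1 := by
  simp only [subset_def, mem_compl_iff, mem_preimage, mem_rectangleUnion, not_exists, not_and]
  constructor
  · rintro h r hr ⟨y, hyr, hyw⟩ hx
    exact h y hyw r hr hx hyr
  · rintro h y hyw r hr hx hyr
    exact h r hr ⟨y, hyr, hyw⟩ hx

lemma exists_rectangleUnion_mk_preimage_eq_interior_compl [MeasurableSpace X] [TopologicalSpace Y]
    [SecondCountableTopology Y]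
    {R : Set (Set X × Set Y)} (hR : R.Countable) (hRm : ∀ r ∈ R, MeasurableSet r.1) :
    ∃ R' : Set (Set X × Set Y), R'.Countable ∧ (∀ r ∈ R', MeasurableSet r.1 ∧ IsOpen r.2) ∧
      ∀ x, Prod.mk x ⁻¹' rectangleUnion R' = interior (Prod.mk x ⁻¹' rectangleUnion R)ᶜ := by
  let B : Set Y → Set X := fun w => ⋂ r ∈ {r ∈ R | (r.2 ∩ w).Nonempty}, r.1ᶜ
  refine ⟨(fun w => (B w, w)) '' countableBasis Y, (countable_countableBasis Y).image _, ?_,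
    fun x => ?_⟩
  · rintro _ ⟨w, hw, rfl⟩
    exact ⟨.biInter (hR.mono (sep_subset R _)) fun r hr => (hRm r hr.1).compl,
      isOpen_of_mem_countableBasis hw⟩
  · ext y
    rw [mem_interior_iff_mem_nhds, (isBasis_countableBasis Y).mem_nhds_iff]
    simp only [B, mem_preimage, mem_rectangleUnion, exists_mem_image, mem_iInter₂, mem_compl_iff]
    refine exists_congr fun w => and_congr_right fun _ => ?_
    rw [and_comm]
    refine and_congr_right fun _ => ?_
    simp only [mem_sep_iff, and_imp]
    exact subset_compl_mk_preimage_rectangleUnion_iff.symm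

variable [MeasurableSpace X] [TopologicalSpace Y] [MeasurableSpace Y]

def IsSectionNowhereDense (N : Set (X × Y)) : Prop :=
  MeasurableSet N ∧ ∀ x, IsClosed (Prod.mk x ⁻¹' N) ∧ IsNowhereDense (Prod.mk x ⁻¹' N)

def IsUniformlyMeagre (A : Set (X × Y)) : Prop :=
  ∃ S : Set (Set (X × Y)), S.Countable ∧ (∀ N ∈ S, IsSectionNowhereDense N) ∧ A ⊆ ⋃₀ S

lemma isSectionNowhereDense_empty : IsSectionNowhereDense (∅ : Set (X × Y)) :=
  ⟨MeasurableSet.empty, fun _ => by simp⟩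

lemma IsSectionNowhereDense.isUniformlyMeagre {N : Set (X × Y)} (h : IsSectionNowhereDense N) :
    IsUniformlyMeagre N :=
  ⟨{N}, countable_singleton N, by simpa using h, by simp⟩

namespace IsUniformlyMeagre

variable {A B : Set (X × Y)}

lemma mono (hAB : A ⊆ B) (hB : IsUniformlyMeagre B) : IsUniformlyMeagre A :=
  let ⟨S, hSc, hS, hBS⟩ := hB
  ⟨S, hSc, hS, hAB.trans hBS⟩

lemma union (hA : IsUniformlyMeagre A) (hB : IsUniformlyMeagre B) : IsUniformlyMeagre (A ∪ B) :=
  let ⟨S, hSc, hS, hAS⟩ := hA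
  let ⟨T, hTc, hT, hBT⟩ := hB
  ⟨S ∪ T, hSc.union hTc, fun N hN => hN.elim (hS N) (hT N),
    sUnion_union S T ▸ union_subset_union hAS hBT⟩

lemma iUnion {ι : Type*} [Countable ι] {A : ι → Set (X × Y)}
    (h : ∀ i, IsUniformlyMeagre (A i)) : IsUniformlyMeagre (⋃ i, A i) := by
  choose S hSc hS hAS using h
  refine ⟨⋃ i, S i, countable_iUnion hSc, fun N hN => ?_, ?_⟩
  · obtain ⟨i, hi⟩ := mem_iUnion.1 hN
    exact hS i N hi
  · rw [sUnion_iUnion]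
    exact iUnion_mono hAS

lemma isMeagre_mk_preimage (h : IsUniformlyMeagre A) (x : X) : IsMeagre (Prod.mk x ⁻¹' A) := by
  obtain ⟨S, hSc, hS, hAS⟩ := h
  refine (isMeagre_biUnion hSc fun N hN => ((hS N hN).2 x).2.isMeagre).mono ?_
  rw [← preimage_iUnion₂, ← sUnion_eq_biUnion]
  exact preimage_mono hAS

lemma univ_prod [OpensMeasurableSpace Y] {s : Set Y} (hs : IsMeagre s) :
    IsUniformlyMeagre (univ ×ˢ s : Set (X × Y)) := by
  obtain ⟨T, hT, hTc, hsT⟩ := isMeagre_iff_countable_union_isNowhereDense.1 hs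
  refine ⟨(fun t => univ ×ˢ closure t) '' T, hTc.image _, ?_, ?_⟩
  · rintro _ ⟨t, ht, rfl⟩
    refine ⟨MeasurableSet.univ.prod isClosed_closure.measurableSet, fun x => ?_⟩
    rw [mk_preimage_prod_right (mem_univ x)]
    exact ⟨isClosed_closure, (hT t ht).closure⟩
  · rintro ⟨x, y⟩ ⟨-, hy⟩
    obtain ⟨t, ht, hyt⟩ := hsT hy
    exact ⟨_, ⟨t, ht, rfl⟩, trivial, subset_closure hyt⟩

lemma exists_seq (h : IsUniformlyMeagre A) :
    ∃ G : ℕ → Set (X × Y), (∀ n, IsSectionNowhereDense (G n)) ∧ A ⊆ ⋃ n, G n := by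
  obtain ⟨S, hSc, hS, hAS⟩ := h
  obtain ⟨G, hG⟩ := (hSc.insert ∅).exists_eq_range (insert_nonempty _ _)
  refine ⟨G, fun n => ?_, ?_⟩
  · rcases (hG ▸ mem_range_self n : G n ∈ insert ∅ S) with hn | hn
    · exact hn ▸ isSectionNowhereDense_empty
    · exact hS _ hn
  · rwa [← sUnion_range, ← hG, sUnion_insert, empty_union]

end IsUniformlyMeagre

def HasUniformBaireProperty (A : Set (X × Y)) : Prop :=
  ∃ R : Set (Set X × Set Y), R.Countable ∧ (∀ r ∈ R, MeasurableSet r.1 ∧ IsOpen r.2) ∧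
    IsUniformlyMeagre (A ∆ rectangleUnion R)

lemma hasUniformBaireProperty_prod [BorelSpace Y] {A : Set X} {B : Set Y} (hA : MeasurableSet A)
    (hB : MeasurableSet B) : HasUniformBaireProperty (A ×ˢ B) := by
  obtain ⟨V, hV, hBV⟩ := hB.residualEq_isOpen
  have hmeagre : IsMeagre (B ∆ V) := hBV.mem_iff.mono fun y hy => by
    simp [mem_symmDiff, hy]
  refine ⟨{(A, V)}, countable_singleton _, by simpa using ⟨hA, hV⟩,
    (IsUniformlyMeagre.univ_prod hmeagre).mono ?_⟩
  rintro ⟨x, y⟩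
  simp only [mem_symmDiff, mem_rectangleUnion, mem_singleton_iff, exists_eq_left, mem_prod,
    mem_univ, true_and]
  tauto

lemma HasUniformBaireProperty.iUnion {ι : Type*} [Countable ι] {A : ι → Set (X × Y)}
    (h : ∀ i, HasUniformBaireProperty (A i)) : HasUniformBaireProperty (⋃ i, A i) := by
  choose R hRc hR hAR using h
  refine ⟨⋃ i, R i, countable_iUnion hRc, fun r hr => ?_,
    (IsUniformlyMeagre.iUnion hAR).mono ?_⟩
  · obtain ⟨i, hi⟩ := mem_iUnion.1 hr
    exact hR i r hi
  · rw [rectangleUnion, biUnion_iUnion]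
    exact iUnion_symmDiff_iUnion_subset

lemma HasUniformBaireProperty.compl [SecondCountableTopology Y] [OpensMeasurableSpace Y]
    {A : Set (X × Y)} (h : HasUniformBaireProperty A) : HasUniformBaireProperty Aᶜ := by
  obtain ⟨R, hRc, hR, hAR⟩ := h
  obtain ⟨R', hR'c, hR', hR'R⟩ :=
    exists_rectangleUnion_mk_preimage_eq_interior_compl hRc fun r hr => (hR r hr).1
  have hopen := isOpen_mk_preimage_rectangleUnion fun r hr => (hR r hr).2
  have hR'_subset : rectangleUnion R' ⊆ (rectangleUnion R)ᶜ := fun p hp =>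
    interior_subset (s := (Prod.mk p.1 ⁻¹' rectangleUnion R)ᶜ) (by rw [← hR'R]; exact hp)
  have hfrontier : IsSectionNowhereDense ((rectangleUnion R)ᶜ \ rectangleUnion R') := by
    refine ⟨(measurableSet_rectangleUnion hRc hR).compl.diff
      (measurableSet_rectangleUnion hR'c hR'), fun x => ?_⟩
    have hclosed := (hopen x).isClosed_compl
    rw [preimage_sdiff, preimage_compl, hR'R, ← hclosed.frontier_eq]
    exact ⟨isClosed_frontier, isClosed_frontier.isNowhereDense_iff.2 (interior_frontier hclosed)⟩
  refine ⟨R', hR'c, hR', (hAR.union hfrontier.isUniformlyMeagre).mono fun p => ?_⟩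
  have hp := @hR'_subset p
  simp only [mem_symmDiff, mem_union, mem_compl_iff, Set.mem_sdiff] at hp ⊢
  tauto

lemma MeasurableSet.hasUniformBaireProperty [SecondCountableTopology Y] [BorelSpace Y]
    {A : Set (X × Y)} (hA : MeasurableSet A) : HasUniformBaireProperty A := by
  rw [← generateFrom_prod] at hA
  induction A, hA using MeasurableSpace.generateFrom_induction with
  | hC t ht =>
    obtain ⟨A, hA, B, hB, rfl⟩ := ht
    exact hasUniformBaireProperty_prod hA hB
  | empty => simpa using hasUniformBaireProperty_prod (B := (∅ : Set Y)) .empty .empty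
  | compl t _ ih => exact ih.compl
  | iUnion f _ ih => exact .iUnion ih

lemma HasUniformBaireProperty.isUniformlyMeagre [BaireSpace Y] {A : Set (X × Y)}
    (h : HasUniformBaireProperty A) (hA : ∀ x, IsMeagre (Prod.mk x ⁻¹' A)) :
    IsUniformlyMeagre A := by
  obtain ⟨R, -, hR, hAR⟩ := h
  have hempty : rectangleUnion R = ∅ := by
    refine eq_empty_of_forall_notMem fun p hp => ?_
    have hmeagre : IsMeagre (Prod.mk p.1 ⁻¹' rectangleUnion R) :=
      ((hA p.1).union (hAR.isMeagre_mk_preimage p.1)).mono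
        (by rw [← preimage_union, union_comm]; exact preimage_mono (le_symmDiff_sup_left A _))
    exact not_isMeagre_of_isOpen (isOpen_mk_preimage_rectangleUnion (fun r hr => (hR r hr).2) p.1)
      ⟨p.2, hp⟩ hmeagre
  rwa [hempty, ← bot_eq_empty, symmDiff_bot] at hAR

theorem fremlin_representation
    (H : Set ((ℕ → Bool) × (ℕ → Bool))) (hH : MeasurableSet H)
    (hmeager : ∀ x : ℕ → Bool, IsMeagre {y | (x, y) ∈ H}) :
    ∃ G : ℕ → Set ((ℕ → Bool) × (ℕ → Bool)),
      (∀ n, MeasurableSet (G n)) ∧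
      (∀ n x, IsClosed {y | (x, y) ∈ G n} ∧ IsNowhereDense {y | (x, y) ∈ G n}) ∧
      H ⊆ ⋃ n, G n := by
  obtain ⟨G, hG, hHG⟩ := (hH.hasUniformBaireProperty.isUniformlyMeagre hmeager).exists_seq
  exact ⟨G, fun n => (hG n).1, fun n => (hG n).2, hHG⟩
end

section
/- Let G ⊆ 2^ω × 2^ω be a Borel set such that every vertical section (G)_x is open. Define G' = {(x,y) : y is an interior point of 2^ω \ (G)_x}. Then G' is a Borel set. -/
open Set

theorem Gprime_is_borel
    (G : Set ((ℕ → Bool) × (ℕ → Bool))) (hG : MeasurableSet G)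
    (hopen : ∀ x : ℕ → Bool, IsOpen {y | (x, y) ∈ G}) :
    MeasurableSet {p : (ℕ → Bool) × (ℕ → Bool) |
      p.2 ∈ interior ({y | (p.1, y) ∈ G}ᶜ)} := by
  obtain ⟨D, Dcount, Ddense⟩ := TopologicalSpace.exists_countable_dense (ℕ → Bool)
  have cylOpen : ∀ (n : ℕ) (s : Fin n → Bool),
      IsOpen {y : ℕ → Bool | ∀ i : Fin n, y (i : ℕ) = s i} := by
    intro n s
    have h : {y : ℕ → Bool | ∀ i : Fin n, y (i : ℕ) = s i}
        = ⋂ i : Fin n, (fun y : ℕ → Bool => y (i : ℕ)) ⁻¹' {s i} := by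
      ext y; simp [Set.mem_iInter]
    rw [h]
    exact isOpen_iInter_of_finite fun i =>
      (continuous_apply _).isOpen_preimage _ (isOpen_discrete _)
  have key : {p : (ℕ → Bool) × (ℕ → Bool) | p.2 ∈ interior ({y | (p.1, y) ∈ G}ᶜ)}
      = ⋃ n : ℕ, ⋃ s : Fin n → Bool,
        ({x | ∀ d ∈ D, (∀ i : Fin n, d (i : ℕ) = s i) → (x, d) ∉ G} ×ˢ
         {y | ∀ i : Fin n, y (i : ℕ) = s i}) := by
    ext ⟨x, y⟩
    simp only [mem_setOf_eq, mem_iUnion, mem_prod]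
    constructor
    · intro hy
      obtain ⟨I, u, hu, hsub⟩ := isOpen_pi_iff.1 isOpen_interior y hy
      set n := (I.sup id) + 1 with hn
      refine ⟨n, fun i => y (i : ℕ), ?_, fun i => rfl⟩
      intro d hd hcyl hdG
      have hdmem : d ∈ (I : Set ℕ).pi u := by
        intro i hi
        have hin : i < n := Nat.lt_succ_of_le (Finset.le_sup (f := id) hi)
        have : d i = y i := hcyl ⟨i, hin⟩
        rw [this]
        exact (hu i hi).2
      have := hsub hdmem
      have := interior_subset this
      exact this hdG
    · rintro ⟨n, s, hxs, hys⟩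
      have hdisj : {y : ℕ → Bool | ∀ i : Fin n, y (i : ℕ) = s i} ∩ {y | (x, y) ∈ G} = ∅ := by
        by_contra hne
        obtain ⟨d, hdD, hd⟩ := Ddense.exists_mem_open
          ((cylOpen n s).inter (hopen x)) (Set.nonempty_iff_ne_empty.2 hne)
        exact hxs d hdD hd.1 hd.2
      have hsub : {y : ℕ → Bool | ∀ i : Fin n, y (i : ℕ) = s i} ⊆ {y | (x, y) ∈ G}ᶜ := by
        intro z hz hzG
        exact absurd (Set.mem_inter hz hzG) (by simp [hdisj])
      exact interior_maximal hsub (cylOpen n s) hys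
  rw [key]
  refine MeasurableSet.iUnion fun n => MeasurableSet.iUnion fun s => ?_
  refine MeasurableSet.prod ?_ (cylOpen n s).measurableSet
  have : {x : ℕ → Bool | ∀ d ∈ D, (∀ i : Fin n, d (i : ℕ) = s i) → (x, d) ∉ G}
      = ⋂ d ∈ D, {x : ℕ → Bool | (∀ i : Fin n, d (i : ℕ) = s i) → (x, d) ∉ G} := by
    ext x; simp
  rw [this]
  refine MeasurableSet.biInter Dcount fun d _ => ?_
  by_cases hc : ∀ i : Fin n, d (i : ℕ) = s i
  · have : {x : ℕ → Bool | (∀ i : Fin n, d (i : ℕ) = s i) → (x, d) ∉ G}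
        = ((fun x : ℕ → Bool => (x, d)) ⁻¹' G)ᶜ := by
      ext x; simp [hc]
    rw [this]
    exact ((measurable_id.prodMk measurable_const) hG).compl
  · have : {x : ℕ → Bool | (∀ i : Fin n, d (i : ℕ) = s i) → (x, d) ∉ G} = Set.univ := by
      ext x; simp [hc]
    rw [this]
    exact MeasurableSet.univ
end

section
/- If X ⊆ 2^ω is an R set, then for every Borel function x ↦ f^x from 2^ω to ω^ω there exists g ∈ ω^ω such that for all x ∈ X there are infinitely many n with f^x(n) = g(n). -/
/-!
Code `g ∈ ω^ω` inside Cantor space by letting row `n` of `y` (the bits `y (Nat.pair n k)`)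
have its first `1` in column `g n`. For fixed `h ∈ ω^ω`, the `y` whose row `n` codes `h n` for infinitely many `n`
form a dense `G_δ` set, since any finite part of `y` can be extended by coding `h n` in a fresh
row. The Borel set of pairs `(x, y)` such that `y` codes infinitely many values of `f^x` therefore
has comeagre vertical sections; as `X` is an R set, the complements of these sections do not cover
`2^ω` over `x ∈ X`, and the `g` coded by a point outside them works for every `x ∈ X`.
-/

def RSet (X : Set (ℕ → Bool)) : Prop :=
  ∀ H : Set ((ℕ → Bool) × (ℕ → Bool)), MeasurableSet H →
    (∀ x : ℕ → Bool, IsMeagre {y | (x, y) ∈ H}) →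
    (⋃ x ∈ X, {y | (x, y) ∈ H}) ≠ Set.univ

open Filter Topology

theorem RSet.exists_forall_mem {X : Set (ℕ → Bool)} (hX : RSet X)
    {S : Set ((ℕ → Bool) × (ℕ → Bool))} (hS : MeasurableSet S)
    (hres : ∀ x, {y | (x, y) ∈ S} ∈ residual (ℕ → Bool)) :
    ∃ y, ∀ x ∈ X, (x, y) ∈ S := by
  have hne := hX Sᶜ hS.compl fun x => by simpa [IsMeagre, Set.compl_ofPred] using hres x
  obtain ⟨y, hy⟩ := (Set.ne_univ_iff_exists_notMem _).1 hne
  simp only [Set.mem_iUnion, Set.mem_ofPred_eq, Set.mem_compl_iff, not_exists, not_not] at hy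
  exact ⟨y, hy⟩

def firstTrueAt (n m : ℕ) : Set (ℕ → Bool) :=
  {y | y (Nat.pair n m) = true ∧ ∀ k < m, y (Nat.pair n k) = false}

open Classical in
noncomputable def firstTrue (y : ℕ → Bool) (n : ℕ) : ℕ :=
  if h : ∃ k, y (Nat.pair n k) = true then Nat.find h else 0

theorem firstTrue_eq_of_mem_firstTrueAt {n m : ℕ} {y : ℕ → Bool} (hy : y ∈ firstTrueAt n m) :
    firstTrue y n = m := by
  have h : ∃ k, y (Nat.pair n k) = true := ⟨m, hy.1⟩
  rw [firstTrue, dif_pos h, Nat.find_eq_iff]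
  exact ⟨hy.1, fun k hk => by simp [hy.2 k hk]⟩

theorem isOpen_firstTrueAt (n m : ℕ) : IsOpen (firstTrueAt n m) := by
  have hcyl : ∀ i b, IsOpen {y : ℕ → Bool | y i = b} := fun i b =>
    (isOpen_discrete {b}).preimage (continuous_apply (A := fun _ : ℕ => Bool) i)
  simp only [firstTrueAt, Set.ofPred_and, Set.ofPred_forall]
  exact (hcyl _ _).inter ((Set.finite_Iio m).isOpen_biInter fun k _ => hcyl _ _)

theorem dense_iUnion_firstTrueAt (h : ℕ → ℕ) (N : ℕ) :
    Dense (⋃ n ≥ N, firstTrueAt n (h n)) := by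
  intro y
  set z : ℕ → ℕ → Bool := fun n i =>
    if (Nat.unpair i).1 = n then decide ((Nat.unpair i).2 = h n) else y i
  have hz_mem : ∀ n, z n ∈ firstTrueAt n (h n) := fun n =>
    ⟨by simp [z], fun k hk => by simp [z, hk.ne]⟩
  have hz_tendsto : Tendsto z atTop (𝓝 y) := tendsto_pi_nhds.2 fun i =>
    tendsto_nhds_of_eventually_eq <|
      (eventually_gt_atTop (Nat.unpair i).1).mono fun n hn => if_neg hn.ne
  exact mem_closure_of_tendsto hz_tendsto <|
    (eventually_ge_atTop N).mono fun n hn => Set.mem_biUnion hn (hz_mem n)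

theorem frequently_mem_firstTrueAt_mem_residual (h : ℕ → ℕ) :
    {y | ∃ᶠ n in atTop, y ∈ firstTrueAt n (h n)} ∈ residual (ℕ → Bool) := by
  have hinter : {y | ∃ᶠ n in atTop, y ∈ firstTrueAt n (h n)} =
      ⋂ N, ⋃ n ≥ N, firstTrueAt n (h n) := by
    ext y
    simp [frequently_atTop]
  rw [hinter, countable_iInter_mem]
  exact fun N => residual_of_dense_open (isOpen_biUnion fun n _ => isOpen_firstTrueAt _ _)
    (dense_iUnion_firstTrueAt h N)

theorem measurableSet_frequently_mem_firstTrueAt {α : Type*} [MeasurableSpace α]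
    {f : α → ℕ → ℕ} (hf : ∀ n, Measurable (f · n)) :
    MeasurableSet {p : α × (ℕ → Bool) | ∃ᶠ n in atTop, p.2 ∈ firstTrueAt n (f p.1 n)} := by
  have hmeas : ∀ n, MeasurableSet {p : α × (ℕ → Bool) | p.2 ∈ firstTrueAt n (f p.1 n)} := by
    intro n
    have hunion : {p : α × (ℕ → Bool) | p.2 ∈ firstTrueAt n (f p.1 n)} =
        ⋃ m, (fun p => f p.1 n) ⁻¹' {m} ∩ Prod.snd ⁻¹' firstTrueAt n m := by
      ext p
      simp
    rw [hunion]
    exact .iUnion fun m => ((hf n).comp measurable_fst (measurableSet_singleton m)).inter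
      (measurable_snd (isOpen_firstTrueAt n m).measurableSet)
  convert MeasurableSet.measurableSet_limsup hmeas
  ext p
  rw [mem_limsup_iff_frequently_mem]
  rfl

theorem RSet_implies_infinitely_equal (X : Set (ℕ → Bool)) (hX : RSet X)
    (f : (ℕ → Bool) → ℕ → ℕ) (hf : Measurable f) :
    ∃ g : ℕ → ℕ, ∀ x ∈ X, {n : ℕ | f x n = g n}.Infinite := by
  obtain ⟨y, hy⟩ := hX.exists_forall_mem
    (measurableSet_frequently_mem_firstTrueAt fun n => hf.eval)
    fun x => frequently_mem_firstTrueAt_mem_residual (f x)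
  refine ⟨firstTrue y, fun x hx => Nat.frequently_atTop_iff_infinite.1 ?_⟩
  exact (hy x hx).mono fun n hn => (firstTrue_eq_of_mem_firstTrueAt hn).symm
end

section
/- Suppose X ⊆ 2^ω has the property that every Borel image of X (in any Polish space, equivalently in ω^ω) has Rothberger's property. Then for every Borel function x ↦ f^x ∈ ω^ω there exists g ∈ ω^ω such that for every x ∈ X there are infinitely many n with f^x(n) = g(n). -/
/-- `Y` has Rothberger's property. -/
def Rothberger {α : Type*} [TopologicalSpace α] (Y : Set α) : Prop :=
  ∀ 𝒢 : ℕ → Set (Set α),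
    (∀ n, (∀ U ∈ 𝒢 n, IsOpen U) ∧ Y ⊆ ⋃₀ 𝒢 n) →
    ∃ U : ℕ → Set α, (∀ n, U n ∈ 𝒢 n) ∧ Y ⊆ ⋃ n, U n

theorem borel_images_rothberger_implies_nice (X : Set (ℕ → Bool))
    (h : ∀ F : (ℕ → Bool) → ℕ → ℕ, Measurable F → Rothberger (F '' X)) :
    ∀ f : (ℕ → Bool) → ℕ → ℕ, Measurable f →
      ∃ g : ℕ → ℕ, ∀ x ∈ X, {n : ℕ | f x n = g n}.Infinite := by
  intro f hf
  have R := h f hf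
  have key : ∀ m : ℕ, ∃ k : ℕ → ℕ, ∀ x ∈ X, ∃ i, f x (Nat.pair m i) = k i := by
    intro m
    obtain ⟨U, hU, hcov⟩ :=
      R (fun i => {S | ∃ k, S = {y : ℕ → ℕ | y (Nat.pair m i) = k}}) (by
        intro i
        constructor
        · rintro S ⟨k, rfl⟩
          show IsOpen ((fun y : ℕ → ℕ => y (Nat.pair m i)) ⁻¹' {k})
          have hc : Continuous fun y : ℕ → ℕ => y (Nat.pair m i) := continuous_apply _
          exact hc.isOpen_preimage ({k} : Set ℕ) (isOpen_discrete _)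
        · rintro y ⟨x, hx, rfl⟩
          exact ⟨{z : ℕ → ℕ | z (Nat.pair m i) = f x (Nat.pair m i)},
            ⟨f x (Nat.pair m i), rfl⟩, rfl⟩)
    choose k hk using hU
    refine ⟨k, fun x hx => ?_⟩
    obtain ⟨i, hi⟩ := Set.mem_iUnion.1 (hcov ⟨x, hx, rfl⟩)
    rw [hk i] at hi
    exact ⟨i, hi⟩
  choose k hk using key
  refine ⟨fun n => k n.unpair.1 n.unpair.2, fun x hx => ?_⟩
  choose i hi using fun m => hk m x hx
  refine Set.infinite_of_injective_forall_mem (f := fun m => Nat.pair m (i m))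
    (fun a b hab => ((Nat.pair_eq_pair).1 hab).1) (fun m => ?_)
  simp only [Set.mem_setOf_eq, Nat.unpair_pair]
  exact hi m
end

section
/- Suppose X ⊆ 2^ω is nice, i.e., for every Borel function x ↦ f^x ∈ ω^ω there exists g with ∀x∈X ∃^∞n f^x(n)=g(n). Then for every Borel function x ↦ (Y^x, f^x) ∈ [ω]^ω × ω^ω there exists g ∈ ω^ω such that for every x ∈ X there are infinitely many n ∈ Y^x with f^x(n) = g(n). -/
/-- `X` is nice. -/
def Nice (X : Set (ℕ → Bool)) : Prop :=
  ∀ f : (ℕ → Bool) → ℕ → ℕ, Measurable f →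
    ∃ g : ℕ → ℕ, ∀ x ∈ X, {n : ℕ | f x n = g n}.Infinite

/-!
At stage `n` record the first `2 ^ n` elements `k` of `Yˣ` together with the values `fˣ(k)`,
coded by a natural number; this is a Borel function of `x`, so niceness gives one `g` guessing
these codes infinitely often for each `x ∈ X`. Decode `g(n)` as `2 ^ n` pairs `(k, v)` and let
the final guess at `k` be the value proposed at the first stage that mentions `k`. Since `2 ^ n`
exceeds the total number `2 ^ n - 1` of keys mentioned at earlier stages, at every stage where
`g` guessed correctly some element of `Yˣ` is mentioned for the first time, and there the final
guess is `fˣ(k)`. Distinct stages give distinct such `k`.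
-/

open Finset

theorem exists_mem_forall_lt_notMem_of_sum_card_lt {α : Type*} [DecidableEq α]
    (s : ℕ → Finset α) {n : ℕ} (h : ∑ m ∈ range n, #(s m) < #(s n)) :
    ∃ k ∈ s n, ∀ m < n, k ∉ s m := by
  by_contra! hcover
  have hsub : s n ⊆ (range n).biUnion s := fun k hk => by
    obtain ⟨m, hm, hkm⟩ := hcover k hk
    exact mem_biUnion.mpr ⟨m, mem_range.mpr hm, hkm⟩
  exact (card_le_card hsub).trans card_biUnion_le |>.not_gt h

section FirstOccurrence

variable (p : (n : ℕ) → Fin (2 ^ n) → ℕ × ℕ)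

def keySet (n : ℕ) : Finset ℕ := univ.image fun i => (p n i).1

noncomputable def firstOccurrence (k : ℕ) : ℕ := sInf {n | k ∈ keySet p n}

noncomputable def firstOccurrenceValue (k : ℕ) : ℕ :=
  Classical.epsilon fun v => ∃ i, p (firstOccurrence p k) i = (k, v)

variable {p}

theorem card_keySet_le (n : ℕ) : #(keySet p n) ≤ 2 ^ n :=
  card_image_le.trans (card_univ.trans (Fintype.card_fin _)).le

theorem exists_fresh_key {n : ℕ} (hn : #(keySet p n) = 2 ^ n) :
    ∃ k ∈ keySet p n, ∀ m < n, k ∉ keySet p m := by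
  refine exists_mem_forall_lt_notMem_of_sum_card_lt _ ?_
  calc ∑ m ∈ range n, #(keySet p m)
      ≤ ∑ m ∈ range n, 2 ^ m := sum_le_sum fun m _ => card_keySet_le m
    _ < 2 ^ n := Nat.geomSum_lt le_rfl fun m hm => mem_range.mp hm
    _ = #(keySet p n) := hn.symm

theorem firstOccurrence_eq {n k : ℕ} (hk : k ∈ keySet p n) (hfresh : ∀ m < n, k ∉ keySet p m) :
    firstOccurrence p k = n := by
  have hn : n ∈ {m | k ∈ keySet p m} := hk
  exact (Nat.sInf_le hn).antisymm (not_lt.mp fun hlt => hfresh _ hlt (Nat.sInf_mem ⟨n, hn⟩))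

theorem firstOccurrenceValue_eq {n k : ℕ} {φ : ℕ → ℕ} (hgraph : ∀ i, (p n i).2 = φ (p n i).1)
    (hk : k ∈ keySet p n) (hfresh : ∀ m < n, k ∉ keySet p m) :
    firstOccurrenceValue p k = φ k := by
  obtain ⟨i, -, rfl⟩ := mem_image.mp hk
  rw [firstOccurrenceValue, firstOccurrence_eq hk hfresh]
  obtain ⟨j, hj⟩ := Classical.epsilon_spec (p := fun v => ∃ j, p n j = ((p n i).1, v)) ⟨_, i, rfl⟩
  simpa [hj] using hgraph j

end FirstOccurrence

noncomputable def graphPrefix (s : ℕ → Bool) (φ : ℕ → ℕ) (n : ℕ) (i : Fin (2 ^ n)) : ℕ × ℕ :=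
  (Nat.nth (s · = true) i, φ (Nat.nth (s · = true) i))

theorem infinite_setOf_eq_firstOccurrenceValue {p : (n : ℕ) → Fin (2 ^ n) → ℕ × ℕ}
    {s : ℕ → Bool} {φ : ℕ → ℕ} {N : Set ℕ} (hN : N.Infinite)
    (hp : ∀ n ∈ N, p n = graphPrefix s φ n) (hs : {k | s k = true}.Infinite) :
    {k | s k = true ∧ φ k = firstOccurrenceValue p k}.Infinite := by
  refine Set.Infinite.of_image (firstOccurrence p) (hN.mono fun n hn => ?_)
  have hinj : Function.Injective fun i : Fin (2 ^ n) => (p n i).1 := by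
    simpa [hp n hn, graphPrefix, Function.comp_def] using
      (Nat.nth_injective hs).comp Fin.val_injective
  obtain ⟨k, hk, hfresh⟩ := exists_fresh_key (p := p) (n := n) <| by
    rw [keySet, card_image_of_injective _ hinj, card_univ, Fintype.card_fin]
  have hks : s k = true := by
    obtain ⟨i, -, rfl⟩ := mem_image.mp hk
    simpa [hp n hn, graphPrefix] using Nat.nth_mem_of_infinite hs i
  have hgraph : ∀ i, (p n i).2 = φ (p n i).1 := by simp [hp n hn, graphPrefix]
  exact ⟨k, ⟨hks, (firstOccurrenceValue_eq hgraph hk hfresh).symm⟩, firstOccurrence_eq hk hfresh⟩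

def decodeGraphPrefix (g : ℕ → ℕ) (n : ℕ) : Fin (2 ^ n) → ℕ × ℕ :=
  (Encodable.decode (g n)).getD default

theorem decodeGraphPrefix_eq {g : ℕ → ℕ} {n : ℕ} {q : Fin (2 ^ n) → ℕ × ℕ}
    (h : Encodable.encode q = g n) : decodeGraphPrefix g n = q := by
  simp [decodeGraphPrefix, ← h, Encodable.encodek]

section Measurability

variable {α : Type*} [MeasurableSpace α]

theorem Measurable.apply_of_countable {ι β : Type*} [Countable ι] [MeasurableSpace ι]
    [MeasurableSingletonClass ι] [MeasurableSpace β] {f : α → ι → β} {e : α → ι}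
    (hf : Measurable f) (he : Measurable e) : Measurable fun x => f x (e x) :=
  (measurable_from_prod_countable_left (f := Function.uncurry f) fun _ => hf.eval).comp
    (measurable_id.prodMk he)

variable {Y : α → ℕ → Bool}

theorem measurable_count (hY : Measurable Y) (a : ℕ) :
    Measurable fun x => Nat.count (fun k => Y x k = true) a := by
  induction a with
  | zero => simp
  | succ a ih =>
    simp only [Nat.count_succ]
    exact ih.add (Measurable.ite (hY.eval (measurableSet_singleton true)) measurable_const
      measurable_const)

theorem measurable_nth (hY : Measurable Y) (hYinf : ∀ x, {k | Y x k = true}.Infinite) (i : ℕ) :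
    Measurable fun x => Nat.nth (fun k => Y x k = true) i := by
  refine measurable_to_countable' fun a => ?_
  have hpre : (fun x => Nat.nth (fun k => Y x k = true) i) ⁻¹' {a}
      = {x | Y x a = true} ∩ {x | Nat.count (fun k => Y x k = true) a = i} := by
    ext x
    constructor
    · rintro rfl
      exact ⟨Nat.nth_mem_of_infinite (hYinf x) i, Nat.count_nth_of_infinite (hYinf x) i⟩
    · rintro ⟨ha, rfl⟩
      exact Nat.nth_count ha
  rw [hpre]
  exact (hY.eval (measurableSet_singleton true)).inter
    (measurable_count hY a (measurableSet_singleton i))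

theorem measurable_encode_graphPrefix {f : α → ℕ → ℕ} (hY : Measurable Y) (hf : Measurable f)
    (hYinf : ∀ x, {k | Y x k = true}.Infinite) :
    Measurable fun x n => Encodable.encode (graphPrefix (Y x) (f x) n) := by
  refine measurable_pi_lambda _ fun n => (measurable_of_countable Encodable.encode).comp ?_
  refine measurable_pi_lambda _ fun i => ?_
  have hnth := measurable_nth hY hYinf i
  exact hnth.prodMk (hf.apply_of_countable hnth)

end Measurability

theorem nice_infinitely_equal_on_prescribed_sets (X : Set (ℕ → Bool)) (hX : Nice X)
    (Y : (ℕ → Bool) → ℕ → Bool) (f : (ℕ → Bool) → ℕ → ℕ)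
    (hY : Measurable Y) (hf : Measurable f)
    (hYinf : ∀ x : ℕ → Bool, {n : ℕ | Y x n = true}.Infinite) :
    ∃ g : ℕ → ℕ, ∀ x ∈ X, {n : ℕ | Y x n = true ∧ f x n = g n}.Infinite := by
  obtain ⟨g, hg⟩ := hX _ (measurable_encode_graphPrefix hY hf hYinf)
  exact ⟨firstOccurrenceValue (decodeGraphPrefix g), fun x hx =>
    infinite_setOf_eq_firstOccurrenceValue (hg x hx) (fun _ => decodeGraphPrefix_eq) (hYinf x)⟩
end

section
/- Suppose X ⊆ 2^ω is nice (for every Borel function x ↦ f^x ∈ ω^ω there exists g with ∀x∈X ∃^∞n f^x(n)=g(n)). Then for every Borel mapping x ↦ f^x ∈ ω^ω there exists an increasing sequence (n_k) such that for every x ∈ X there are infinitely many k with f^x(n_k) < n_{k+1}. -/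
lemma nat_meas_set (s : Set ℕ) : MeasurableSet s :=
  MeasurableSet.of_discrete

lemma inf_gt (S : Set ℕ) (hS : S.Infinite) (a : ℕ) : ∃ b ∈ S, a < b := by
  obtain ⟨b, hb⟩ := (hS.diff (Set.finite_le_nat a)).nonempty
  refine ⟨b, hb.1, ?_⟩
  have hb2 := hb.2
  simp only [Set.mem_setOf_eq, not_le] at hb2
  exact hb2

lemma meas_sInf_aux {S : (ℕ → Bool) → Set ℕ}
    (h : ∀ j : ℕ, MeasurableSet {x | j ∈ S x}) :
    Measurable (fun x => sInf (S x)) := by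
  apply measurable_to_countable'
  intro v
  rcases v with _ | u
  · have heq : (fun x => sInf (S x)) ⁻¹' {0} =
        {x | 0 ∈ S x} ∪ ⋂ w, {x | w ∈ S x}ᶜ := by
      ext x
      simp only [Set.mem_preimage, Set.mem_singleton_iff, Set.mem_union, Set.mem_iInter,
        Set.mem_compl_iff, Set.mem_setOf_eq, Nat.sInf_eq_zero]
      constructor
      · rintro (h0 | he)
        · exact Or.inl h0
        · exact Or.inr fun w hw => by rw [he] at hw; exact hw
      · rintro (h0 | he)
        · exact Or.inl h0
        · exact Or.inr (Set.eq_empty_iff_forall_notMem.mpr he)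
    rw [heq]
    exact (h 0).union (MeasurableSet.iInter fun w => (h w).compl)
  · have heq : (fun x => sInf (S x)) ⁻¹' {u + 1} =
        {x | (u + 1) ∈ S x} ∩ ⋂ w ∈ Set.Iio (u + 1), {x | w ∈ S x}ᶜ := by
      ext x
      simp only [Set.mem_preimage, Set.mem_singleton_iff, Set.mem_inter_iff, Set.mem_iInter,
        Set.mem_compl_iff, Set.mem_setOf_eq, Set.mem_Iio]
      constructor
      · intro he
        have hne : (S x).Nonempty := by
          by_contra hc
          rw [Set.not_nonempty_iff_eq_empty] at hc
          rw [hc, Nat.sInf_empty] at he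
          omega
        constructor
        · rw [← he]; exact Nat.sInf_mem hne
        · intro w hw
          have hlt : w < sInf (S x) := by rw [he]; exact hw
          exact Nat.notMem_of_lt_sInf hlt
      · rintro ⟨hmem, hmin⟩
        have h1 : sInf (S x) ≤ u + 1 := Nat.sInf_le hmem
        have h2 : ¬ sInf (S x) < u + 1 :=
          fun hlt => hmin _ hlt (Nat.sInf_mem ⟨_, hmem⟩)
        omega
    rw [heq]
    exact (h (u + 1)).inter
      (MeasurableSet.biInter (Set.to_countable _) fun w _ => (h w).compl)

theorem nice_implies_interval_hitting (X : Set (ℕ → Bool)) (hX : Nice X)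
    (f : (ℕ → Bool) → ℕ → ℕ) (hf : Measurable f) :
    ∃ n : ℕ → ℕ, StrictMono n ∧
      ∀ x ∈ X, {k : ℕ | f x (n k) < n (k + 1)}.Infinite := by
  classical
  -- running maximum of f
  let fbar : (ℕ → Bool) → ℕ → ℕ :=
    fun x m => Nat.rec (motive := fun _ => ℕ) (f x 0) (fun k acc => max acc (f x (k + 1))) m
  have fbar_succ : ∀ x m, fbar x (m + 1) = max (fbar x m) (f x (m + 1)) := fun _ _ => rfl
  have fbar_mono : ∀ x, Monotone (fbar x) := by
    intro x
    apply monotone_nat_of_le_succ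
    intro m
    rw [fbar_succ]
    exact le_max_left _ _
  have fbar_le : ∀ x v m, v ≤ m → f x v ≤ fbar x m := by
    intro x v m hvm
    induction m with
    | zero =>
      have hv : v = 0 := by omega
      subst hv
      exact le_refl _
    | succ k ih =>
      rcases Nat.lt_or_ge v (k + 1) with h | h
      · exact le_trans (ih (by omega)) (by rw [fbar_succ]; exact le_max_left _ _)
      · have hv : v = k + 1 := by omega
        subst hv
        rw [fbar_succ]
        exact le_max_right _ _
  have hmeas_coord : ∀ m, Measurable fun x => fbar x m := by
    intro m
    induction m with
    | zero => exact (measurable_pi_apply 0).comp hf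
    | succ k ih => exact Measurable.max ih ((measurable_pi_apply (k + 1)).comp hf)
  have fbar_meas : Measurable fbar := measurable_pi_iff.mpr hmeas_coord
  -- first application of Nice
  obtain ⟨g₁, hg₁⟩ := hX fbar fbar_meas
  -- the ladder q built from g₁
  let Gm : ℕ → ℕ := fun v => (Finset.range (v + 1)).sup g₁ + v + 1
  have Gm_gt : ∀ v, v < Gm v := by intro v; show v < _ + v + 1; omega
  have Gm_mono : Monotone Gm := by
    intro a b hab
    have h1 : (Finset.range (a + 1)).sup g₁ ≤ (Finset.range (b + 1)).sup g₁ :=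
      Finset.sup_mono (Finset.range_subset_range.mpr (by omega))
    show _ + a + 1 ≤ _ + b + 1
    omega
  have g₁_lt_Gm : ∀ m, g₁ m < Gm m := by
    intro m
    have h1 : g₁ m ≤ (Finset.range (m + 1)).sup g₁ :=
      Finset.le_sup (Finset.self_mem_range_succ m)
    show g₁ m < _ + m + 1
    omega
  let q : ℕ → ℕ := fun j => Nat.rec (motive := fun _ => ℕ) 0 (fun _ p => Gm p) j
  have q_succ : ∀ j, q (j + 1) = Gm (q j) := fun _ => rfl
  have q_sm : StrictMono q := by
    apply strictMono_nat_of_lt_succ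
    intro j
    rw [q_succ]
    exact Gm_gt (q j)
  have q_ge : ∀ j, j ≤ q j := by
    intro j
    induction j with
    | zero => exact Nat.zero_le _
    | succ k ih =>
      have h1 := Gm_gt (q k)
      have hq : q (k + 1) = Gm (q k) := q_succ k
      omega
  -- the "good" indices
  let GS : (ℕ → Bool) → Set ℕ := fun x => {j | fbar x (q j) < q (j + 2)}
  have GS_meas : ∀ j, MeasurableSet {x | j ∈ GS x} := by
    intro j
    exact (hmeas_coord (q j)) (nat_meas_set (Set.Iio (q (j + 2))))
  have GS_inf : ∀ x ∈ X, (GS x).Infinite := by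
    intro x hx
    by_contra hfin
    rw [Set.not_infinite] at hfin
    obtain ⟨b, hb⟩ := hfin.bddAbove
    obtain ⟨m, hmA, hmgt⟩ := inf_gt _ (hg₁ x hx) (q (b + 2))
    have hmA' : fbar x m = g₁ m := hmA
    set jm := Nat.findGreatest (fun j => q j ≤ m) m with hjm
    have h00 : q 0 ≤ m := by
      have h0 : q 0 = 0 := rfl
      omega
    have hspec : q jm ≤ m :=
      Nat.findGreatest_spec (P := fun j => q j ≤ m) (Nat.zero_le m) h00
    have hnext : m < q (jm + 1) := by
      by_cases hc : jm + 1 ≤ m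
      · by_contra hcon
        push_neg at hcon
        exact Nat.findGreatest_is_greatest (P := fun j => q j ≤ m)
          (Nat.lt_succ_self jm) hc hcon
      · push_neg at hc
        have := q_ge (jm + 1)
        omega
    have hjmb : b + 1 ≤ jm := by
      apply Nat.le_findGreatest (P := fun j => q j ≤ m)
      · have h1 := q_ge (b + 1)
        have h2 : q (b + 1) ≤ q (b + 2) := q_sm.monotone (show b + 1 ≤ b + 2 by omega)
        omega
      · have h2 : q (b + 1) ≤ q (b + 2) := q_sm.monotone (show b + 1 ≤ b + 2 by omega)
        omega
    have hjmG : jm ∈ GS x := by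
      show fbar x (q jm) < q (jm + 2)
      calc fbar x (q jm) ≤ fbar x m := fbar_mono x hspec
        _ = g₁ m := hmA'
        _ < Gm m := g₁_lt_Gm m
        _ ≤ Gm (q (jm + 1)) := Gm_mono (le_of_lt hnext)
        _ = q (jm + 2) := (q_succ (jm + 1)).symm
    have := hb hjmG
    omega
  -- enumeration of the good indices
  let E : ℕ → (ℕ → Bool) → ℕ := fun i =>
    Nat.rec (motive := fun _ => (ℕ → Bool) → ℕ)
      (fun y => sInf (GS y)) (fun _ prev y => sInf {j | j ∈ GS y ∧ prev y < j}) i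
  have E_zero : ∀ y, E 0 y = sInf (GS y) := fun _ => rfl
  have E_succ : ∀ i y, E (i + 1) y = sInf {j | j ∈ GS y ∧ E i y < j} := fun _ _ => rfl
  have E_meas : ∀ i, Measurable (E i) := by
    intro i
    induction i with
    | zero => exact meas_sInf_aux GS_meas
    | succ k ih =>
      apply meas_sInf_aux (S := fun y => {j | j ∈ GS y ∧ E k y < j})
      intro j
      have heq : {x | j ∈ {j' | j' ∈ GS x ∧ E k x < j'}} =
          {x | j ∈ GS x} ∩ (E k) ⁻¹' (Set.Iio j) := rfl
      rw [heq]
      exact (GS_meas j).inter (ih (nat_meas_set (Set.Iio j)))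
  -- second application of Nice
  obtain ⟨φ, hφ⟩ := hX (fun x i => E i x) (measurable_pi_iff.mpr E_meas)
  -- per-point properties of E on X
  have mem_succ : ∀ x, (GS x).Infinite → ∀ i, E (i + 1) x ∈ GS x ∧ E i x < E (i + 1) x := by
    intro x hinf i
    have hne : {j | j ∈ GS x ∧ E i x < j}.Nonempty := by
      obtain ⟨b, hbS, hb⟩ := inf_gt _ hinf (E i x)
      exact ⟨b, hbS, hb⟩
    have hmem := Nat.sInf_mem hne
    rw [← E_succ i x] at hmem
    exact hmem
  have E_memGS : ∀ x, (GS x).Infinite → ∀ i, E i x ∈ GS x := by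
    intro x hinf i
    cases i with
    | zero =>
      have := Nat.sInf_mem hinf.nonempty
      rw [← E_zero x] at this
      exact this
    | succ k => exact (mem_succ x hinf k).1
  have E_sm : ∀ x, (GS x).Infinite → StrictMono (fun i => E i x) :=
    fun x hinf => strictMono_nat_of_lt_succ (fun i => (mem_succ x hinf i).2)
  have E_ge : ∀ x, (GS x).Infinite → ∀ i, i ≤ E i x := by
    intro x hinf i
    induction i with
    | zero => exact Nat.zero_le _
    | succ k ih =>
      have := (mem_succ x hinf k).2
      omega
  -- the set of plausible predicted values
  let W : Set ℕ := {w | ∃ i, φ i = w ∧ 2 * i ≤ w}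
  have compl_W : ∀ a, ∃ w, a ≤ w ∧ w ∉ W := by
    intro a
    by_contra hc
    push_neg at hc
    have hsub : Finset.Ico a (2 * (a + 1)) ⊆ (Finset.range (a + 1)).image φ := by
      intro w hw
      rw [Finset.mem_Ico] at hw
      obtain ⟨i, hi1, hi2⟩ := hc w hw.1
      rw [Finset.mem_image]
      exact ⟨i, Finset.mem_range.mpr (by omega), hi1⟩
    have h2 : (Finset.Ico a (2 * (a + 1))).card = a + 2 := by
      rw [Nat.card_Ico]
      omega
    have h3 := Finset.card_le_card hsub
    have h4 := Finset.card_image_le (s := Finset.range (a + 1)) (f := φ)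
    rw [Finset.card_range] at h4
    omega
  -- the shadow sequence γ, avoiding W, with gaps ≥ 3
  let γ : ℕ → ℕ := fun t =>
    Nat.rec (motive := fun _ => ℕ)
      (sInf {w | w ∉ W}) (fun _ p => sInf {w | p + 3 ≤ w ∧ w ∉ W}) t
  have γ_zero : γ 0 = sInf {w | w ∉ W} := rfl
  have γ_succ : ∀ t, γ (t + 1) = sInf {w | γ t + 3 ≤ w ∧ w ∉ W} := fun _ => rfl
  have γ_succ_mem : ∀ t, γ t + 3 ≤ γ (t + 1) ∧ γ (t + 1) ∉ W := by
    intro t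
    obtain ⟨w, hw1, hw2⟩ := compl_W (γ t + 3)
    have hmem := Nat.sInf_mem (⟨w, hw1, hw2⟩ : {w | γ t + 3 ≤ w ∧ w ∉ W}.Nonempty)
    rw [← γ_succ t] at hmem
    exact hmem
  have γ_notW : ∀ t, γ t ∉ W := by
    intro t
    cases t with
    | zero =>
      obtain ⟨w, _, hw⟩ := compl_W 0
      have := Nat.sInf_mem (⟨w, hw⟩ : {w | w ∉ W}.Nonempty)
      rw [← γ_zero] at this
      exact this
    | succ k => exact (γ_succ_mem k).2
  have γ_gap : ∀ t, γ t + 3 ≤ γ (t + 1) := fun t => (γ_succ_mem t).1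
  have γ_sm : StrictMono γ := strictMono_nat_of_lt_succ (fun t => by have := γ_gap t; omega)
  have γ_ge : ∀ t, 3 * t ≤ γ t := by
    intro t
    induction t with
    | zero => omega
    | succ k ih =>
      have := γ_gap k
      omega
  -- the final ladder
  refine ⟨fun K => q (γ K + 1), ?_, ?_⟩
  · intro a b hab
    have h1 : γ a + 1 < γ b + 1 := by
      have := γ_sm hab
      omega
    exact q_sm h1
  · intro x hx
    have hGinf := GS_inf x hx
    show {k : ℕ | f x (q (γ k + 1)) < q (γ (k + 1) + 1)}.Infinite
    by_contra hfin
    rw [Set.not_infinite] at hfin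
    obtain ⟨K₀, hK₀⟩ := hfin.bddAbove
    -- no large block is hit
    have hno : ∀ K, K₀ < K →
        ¬ ∃ j, j ∈ GS x ∧ γ K + 1 ≤ j ∧ j + 2 ≤ γ (K + 1) + 1 := by
      intro K hK hex
      obtain ⟨j, hjG, h1, h2⟩ := hex
      have hcatch : f x (q (γ K + 1)) < q (γ (K + 1) + 1) := by
        calc f x (q (γ K + 1)) ≤ fbar x (q (γ K + 1)) := fbar_le x _ _ le_rfl
          _ ≤ fbar x (q j) := fbar_mono x (q_sm.monotone h1)
          _ < q (j + 2) := hjG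
          _ ≤ q (γ (K + 1) + 1) := q_sm.monotone h2
      have hKmem : K ∈ {k : ℕ | f x (q (γ k + 1)) < q (γ (k + 1) + 1)} := hcatch
      have := hK₀ hKmem
      omega
    set B₁ := γ (K₀ + 1) + 1 with hB₁
    -- every large good index is a shadow point
    have hstar : ∀ v, v ∈ GS x → B₁ ≤ v → ∃ t, v = γ t := by
      intro v hvG hvB
      have hwit : γ (K₀ + 1) + 1 ≤ v := hvB
      have hKb : K₀ + 1 ≤ v := by
        have := γ_ge (K₀ + 1)
        omega
      have hPK : γ (Nat.findGreatest (fun K => γ K + 1 ≤ v) v) + 1 ≤ v :=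
        Nat.findGreatest_spec (P := fun K => γ K + 1 ≤ v) hKb hwit
      set K := Nat.findGreatest (fun K => γ K + 1 ≤ v) v with hKdef
      have hKK₀ : K₀ + 1 ≤ K :=
        Nat.le_findGreatest (P := fun K => γ K + 1 ≤ v) hKb hwit
      have hKv : K + 1 ≤ v := by
        have := γ_ge K
        omega
      have hnP : ¬ (γ (K + 1) + 1 ≤ v) :=
        Nat.findGreatest_is_greatest (P := fun K => γ K + 1 ≤ v)
          (Nat.lt_succ_self K) hKv
      have hge : γ (K + 1) ≤ v := by
        by_contra hcon
        push_neg at hcon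
        -- v < γ (K+1) and γ(K+1)+1 > v: then v+2 ≤ γ(K+1)+1, contradiction with hno
        exact hno K (by omega) ⟨v, hvG, hPK, by omega⟩
      exact ⟨K + 1, by omega⟩
    -- density dichotomy
    by_cases hD : {i | E i x < 2 * i}.Infinite
    · -- dense goods: counting contradiction
      obtain ⟨i, hiD, hilt⟩ := inf_gt _ hD (3 * B₁ + 3)
      have hiDlt : E i x < 2 * i := hiD
      set T := (Finset.range (i + 1)).image (fun k => E k x) with hT
      have hTcard : T.card = i + 1 := by
        rw [hT, Finset.card_image_of_injective _ (E_sm x hGinf).injective, Finset.card_range]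
      have hTsub : T ⊆ Finset.range B₁ ∪ (Finset.range ((2 * i) / 3 + 1)).image γ := by
        intro v hv
        rw [hT, Finset.mem_image] at hv
        obtain ⟨k, hk, hkv⟩ := hv
        rw [Finset.mem_range] at hk
        have hvlt : v < 2 * i := by
          have h1 : E k x ≤ E i x := (E_sm x hGinf).monotone (show k ≤ i by omega)
          omega
        by_cases hvB : v < B₁
        · exact Finset.mem_union_left _ (Finset.mem_range.mpr hvB)
        · push_neg at hvB
          have hvGS : v ∈ GS x := by
            rw [← hkv]
            exact E_memGS x hGinf k
          obtain ⟨t, ht⟩ := hstar v hvGS hvB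
          apply Finset.mem_union_right
          rw [Finset.mem_image]
          refine ⟨t, Finset.mem_range.mpr ?_, ht.symm⟩
          have h3t : 3 * t ≤ γ t := γ_ge t
          have h3t2 : 3 * t < 2 * i := by
            rw [ht] at hvlt
            omega
          have : t ≤ (2 * i) / 3 := by omega
          omega
      have hcount := Finset.card_le_card hTsub
      have hub : (Finset.range B₁ ∪ (Finset.range ((2 * i) / 3 + 1)).image γ).card
          ≤ B₁ + ((2 * i) / 3 + 1) := by
        refine le_trans (Finset.card_union_le _ _) ?_
        have h1 : (Finset.range B₁).card = B₁ := Finset.card_range _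
        have h2 : ((Finset.range ((2 * i) / 3 + 1)).image γ).card ≤ (2 * i) / 3 + 1 := by
          refine le_trans Finset.card_image_le ?_
          rw [Finset.card_range]
        omega
      omega
    · -- sparse goods: the prediction validates, contradiction with the shadow
      rw [Set.not_infinite] at hD
      obtain ⟨I₀, hI₀⟩ := hD.bddAbove
      have hφx : {i | E i x = φ i}.Infinite := by
        have := hφ x hx
        simpa using this
      obtain ⟨i, hiH, hilt⟩ := inf_gt _ hφx (max I₀ B₁)
      have hiH' : E i x = φ i := hiH
      have hI₀i : I₀ < i := lt_of_le_of_lt (le_max_left _ _) hilt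
      have hB₁i : B₁ < i := lt_of_le_of_lt (le_max_right _ _) hilt
      have h2i : 2 * i ≤ E i x := by
        rcases Nat.lt_or_ge (E i x) (2 * i) with hc | hc
        · exfalso
          have hmem : i ∈ {i' | E i' x < 2 * i'} := hc
          have := hI₀ hmem
          omega
        · exact hc
      have hvB : B₁ ≤ E i x := by
        have := E_ge x hGinf i
        omega
      obtain ⟨t, ht⟩ := hstar (E i x) (E_memGS x hGinf i) hvB
      have hW : E i x ∈ W := ⟨i, hiH'.symm, h2i⟩
      rw [ht] at hW
      exact γ_notW t hW
end

section
/- If a family {g^x : x ∈ X} ⊆ ω^ω is dominating (every function in ω^ω is eventually bounded by some g^x) and x ↦ g^x is Borel, then X is not nice, i.e., there exists a Borel function x ↦ f^x ∈ ω^ω such that no single g ∈ ω^ω satisfies: for all x ∈ X, f^x(n)=g(n) for infinitely many n. -/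
theorem dominating_borel_family_not_nice (X : Set (ℕ → Bool))
    (g : (ℕ → Bool) → ℕ → ℕ) (hg : Measurable g)
    (hdom : ∀ h : ℕ → ℕ, ∃ x ∈ X, ∀ᶠ n in Filter.atTop, h n ≤ g x n) :
    ∃ f : (ℕ → Bool) → ℕ → ℕ, Measurable f ∧
      ∀ g' : ℕ → ℕ, ∃ x ∈ X, {n : ℕ | f x n = g' n}.Finite := by
  refine ⟨g, hg, fun g' => ?_⟩
  obtain ⟨x, hxX, hx⟩ := hdom (fun n => g' n + 1)
  obtain ⟨N, hN⟩ := Filter.eventually_atTop.mp hx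
  refine ⟨x, hxX, (Set.finite_Iio N).subset fun n hn => ?_⟩
  by_contra h
  have := hN n (not_lt.mp h)
  simp only [Set.mem_setOf_eq] at hn
  omega
end

section
/- Suppose X ⊆ 2^ω is nice (for every Borel function x ↦ f^x ∈ ω^ω there exists g with ∀x∈X ∃^∞n f^x(n)=g(n)). Then for every Borel mapping x ↦ Y^x ∈ [ω]^ω there exists an infinite set Y = {u_0 < u_1 < ...} ⊆ ω with u_{n+1} ≥ u_n + 2 for all n, such that Y ∩ Y^x is infinite for every x ∈ X. -/
/-!
Let `f^x(n)` code the first `3n + 1` elements of `Y^x`; niceness gives one sequence `g` of codes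
that guesses `f^x` correctly infinitely often for every `x ∈ X`. Decode `g(n)` as a finite set
`S_n` and choose `c_n` greedily, at distance at least two from `c_0, …, c_{n-1}`, and in `S_n`
whenever possible. This is possible as soon as `|S_n| > 3n`, since each earlier choice excludes at
most three numbers. So `c_n ∈ Y^x` whenever `g` guesses `f^x(n)`, and the increasing enumeration
of `{c_n}` is the required `u`.
-/

section Measurability

variable {α : Type*} [MeasurableSpace α] {Y : α → ℕ → Bool}

theorem measurable_count_of_measurable (hY : Measurable Y) (m : ℕ) :
    Measurable fun a => Nat.count (fun j => Y a j = true) m := by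
  induction m with
  | zero => simp only [Nat.count_zero]; exact measurable_const
  | succ m ih =>
    simp only [Nat.count_succ]
    exact ih.add (Measurable.ite (hY.eval (measurableSet_singleton true)) measurable_const
      measurable_const)

theorem measurable_nth_of_measurable (hY : Measurable Y)
    (hinf : ∀ a, {n | Y a n = true}.Infinite) (k : ℕ) :
    Measurable fun a => Nat.nth (fun j => Y a j = true) k := by
  refine measurable_to_countable' fun m => ?_
  have hpre : (fun a => Nat.nth (fun j => Y a j = true) k) ⁻¹' {m} =
      {a | Y a m = true} ∩ {a | Nat.count (fun j => Y a j = true) m = k} := by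
    ext a
    constructor
    · rintro rfl
      exact ⟨Nat.nth_mem_of_infinite (hinf a) k, Nat.count_nth_of_infinite (hinf a) k⟩
    · rintro ⟨hm, rfl⟩
      exact Nat.nth_count hm
  rw [hpre]
  exact (hY.eval (measurableSet_singleton true)).inter
    (measurable_count_of_measurable hY m (measurableSet_singleton k))

end Measurability

theorem Nice.exists_eq_infinite {X : Set (ℕ → Bool)} (hX : Nice X) {β : Type*}
    [Encodable β] [Inhabited β] (F : (ℕ → Bool) → ℕ → β)
    (hF : ∀ n, Measurable fun x => Encodable.encode (F x n)) :
    ∃ G : ℕ → β, ∀ x ∈ X, {n | F x n = G n}.Infinite := by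
  obtain ⟨g, hg⟩ := hX (fun x n => Encodable.encode (F x n)) (measurable_pi_lambda _ hF)
  refine ⟨fun n => (Encodable.decode (g n)).getD default, fun x hx => (hg x hx).mono ?_⟩
  intro n hn
  simp only [Set.mem_ofPred_eq] at hn ⊢
  rw [← hn, Encodable.encodek, Option.getD_some]

def Apart (a b : ℕ) : Prop := a + 2 ≤ b ∨ b + 2 ≤ a

theorem Apart.symm {a b : ℕ} (h : Apart a b) : Apart b a := Or.symm h

theorem Apart.ne {a b : ℕ} (h : Apart a b) : a ≠ b := by
  rcases h with h | h <;> omega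

theorem exists_apart_of_card_lt (S H : Finset ℕ) (h : 3 * H.card < S.card) :
    ∃ a ∈ S, ∀ b ∈ H, Apart a b := by
  have hnear : (H.biUnion fun b => Finset.Icc (b - 1) (b + 1)).card ≤ H.card * 3 :=
    Finset.card_biUnion_le_card_mul _ _ _ fun b _ => by simp only [Nat.card_Icc]; omega
  obtain ⟨a, haS, haH⟩ := Finset.exists_mem_notMem_of_card_lt_card
    (by omega : (H.biUnion fun b => Finset.Icc (b - 1) (b + 1)).card < S.card)
  refine ⟨a, haS, fun b hb => ?_⟩
  have : a ∉ Finset.Icc (b - 1) (b + 1) := fun hab => haH (Finset.mem_biUnion.2 ⟨b, hb, hab⟩)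
  simp only [Finset.mem_Icc, not_and_or, not_le] at this
  unfold Apart
  omega

open Classical in
noncomputable def pickApart (S H : Finset ℕ) : ℕ :=
  if h : ∃ a ∈ S, ∀ b ∈ H, Apart a b then h.choose else H.sup id + 2

theorem apart_pickApart (S H : Finset ℕ) : ∀ b ∈ H, Apart (pickApart S H) b := by
  intro b hb
  unfold pickApart
  split_ifs with h
  · exact h.choose_spec.2 b hb
  · have : b ≤ H.sup id := Finset.le_sup (f := id) hb
    right; omega

theorem pickApart_mem {S H : Finset ℕ} (h : 3 * H.card < S.card) : pickApart S H ∈ S := by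
  have hex := exists_apart_of_card_lt S H h
  unfold pickApart
  rw [dif_pos hex]
  exact hex.choose_spec.1

noncomputable def apartChoice (S : ℕ → Finset ℕ) (n : ℕ) : ℕ :=
  pickApart (S n) ((Finset.range n).attach.image fun m => apartChoice S m.1)
decreasing_by exact Finset.mem_range.1 m.2

theorem apart_apartChoice_of_lt (S : ℕ → Finset ℕ) {m n : ℕ} (h : m < n) :
    Apart (apartChoice S n) (apartChoice S m) := by
  rw [apartChoice]
  exact apart_pickApart _ _ _
    (Finset.mem_image.2 ⟨⟨m, Finset.mem_range.2 h⟩, Finset.mem_attach _ _, rfl⟩)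

theorem pairwise_apart_apartChoice (S : ℕ → Finset ℕ) :
    Pairwise fun m n => Apart (apartChoice S m) (apartChoice S n) := by
  intro m n hmn
  rcases hmn.lt_or_gt with h | h
  · exact (apart_apartChoice_of_lt S h).symm
  · exact apart_apartChoice_of_lt S h

theorem apartChoice_mem (S : ℕ → Finset ℕ) {n : ℕ} (h : 3 * n < (S n).card) :
    apartChoice S n ∈ S n := by
  rw [apartChoice]
  refine pickApart_mem (lt_of_le_of_lt ?_ h)
  calc 3 * _ ≤ 3 * (Finset.range n).attach.card := Nat.mul_le_mul_left 3 Finset.card_image_le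
    _ = 3 * n := by rw [Finset.card_attach, Finset.card_range]

theorem Nat.nth_add_two_le {p : ℕ → Prop} (hp : (Set.ofPred p).Infinite)
    (hapart : ∀ a b, p a → p b → a ≠ b → Apart a b) (n : ℕ) :
    Nat.nth p n + 2 ≤ Nat.nth p (n + 1) := by
  have hlt := Nat.nth_strictMono hp (Nat.lt_add_one n)
  rcases hapart _ _ (Nat.nth_mem_of_infinite hp n) (Nat.nth_mem_of_infinite hp (n + 1)) hlt.ne
    with h | h
  · exact h
  · omega

theorem Nat.infinite_setOf_nth {p q : ℕ → Prop} (hp : (Set.ofPred p).Infinite)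
    (hpq : {m | p m ∧ q m}.Infinite) : {k | q (Nat.nth p k)}.Infinite := by
  intro hfin
  refine hpq ((hfin.image (Nat.nth p)).subset ?_)
  rintro m ⟨hpm, hqm⟩
  obtain ⟨k, rfl⟩ : m ∈ Set.range (Nat.nth p) := by rwa [Nat.range_nth_of_infinite hp]
  exact ⟨k, hqm, rfl⟩

theorem exists_sparse_strictMono_of_finsets (S : ℕ → Finset ℕ) :
    ∃ u : ℕ → ℕ, StrictMono u ∧ (∀ n, u n + 2 ≤ u (n + 1)) ∧
      ∀ s : Set ℕ, {n | 3 * n < (S n).card ∧ ↑(S n) ⊆ s}.Infinite →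
        {k | u k ∈ s}.Infinite := by
  set c := apartChoice S
  have hc_apart := pairwise_apart_apartChoice S
  have hc_inj : c.Injective := fun m n h => by_contra fun hmn => (hc_apart hmn).ne h
  have hc_inf : (Set.range c).Infinite := Set.infinite_range_of_injective hc_inj
  refine ⟨Nat.nth (· ∈ Set.range c), Nat.nth_strictMono hc_inf, Nat.nth_add_two_le hc_inf ?_,
    fun s hs => Nat.infinite_setOf_nth (p := (· ∈ Set.range c)) (q := (· ∈ s)) hc_inf ?_⟩
  · rintro _ _ ⟨m, rfl⟩ ⟨n, rfl⟩ hne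
    exact hc_apart fun h => hne (congrArg c h)
  · refine (hs.image hc_inj.injOn).mono ?_
    rintro _ ⟨n, ⟨hn_card, hn_sub⟩, rfl⟩
    exact ⟨⟨n, rfl⟩, hn_sub (apartChoice_mem S hn_card)⟩

theorem nice_implies_sparse_diagonal_set (X : Set (ℕ → Bool)) (hX : Nice X)
    (Y : (ℕ → Bool) → ℕ → Bool) (hY : Measurable Y)
    (hYinf : ∀ x : ℕ → Bool, {n : ℕ | Y x n = true}.Infinite) :
    ∃ u : ℕ → ℕ, StrictMono u ∧ (∀ n, u n + 2 ≤ u (n + 1)) ∧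
      ∀ x ∈ X, {k : ℕ | Y x (u k) = true}.Infinite := by
  set F : (ℕ → Bool) → ℕ → Finset ℕ := fun x n =>
    Finset.univ.image fun i : Fin (3 * n + 1) => Nat.nth (fun j => Y x j = true) i
  have hF : ∀ n, Measurable fun x => Encodable.encode (F x n) := fun n =>
    (measurable_of_countable fun v : Fin (3 * n + 1) → ℕ =>
      Encodable.encode (Finset.univ.image v)).comp
      (measurable_pi_lambda _ fun i => measurable_nth_of_measurable hY hYinf i)
  have hF_card : ∀ x n, (F x n).card = 3 * n + 1 := fun x n => by
    rw [Finset.card_image_of_injective _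
      fun i j h => Fin.ext ((Nat.nth_strictMono (hYinf x)).injective h),
      Finset.card_univ, Fintype.card_fin]
  have hF_sub : ∀ x n, ↑(F x n) ⊆ {m | Y x m = true} := fun x n m hm => by
    obtain ⟨i, -, rfl⟩ := Finset.mem_image.1 hm
    exact Nat.nth_mem_of_infinite (hYinf x) i
  obtain ⟨G, hG⟩ := hX.exists_eq_infinite F hF
  obtain ⟨u, hu_mono, hu_gap, hu_hits⟩ := exists_sparse_strictMono_of_finsets G
  refine ⟨u, hu_mono, hu_gap, fun x hx => hu_hits {m | Y x m = true} ((hG x hx).mono ?_)⟩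
  rintro n (hn : F x n = G n)
  refine ⟨?_, hn ▸ hF_sub x n⟩
  rw [← hn, hF_card]
  omega
end

section
/- There exists a Borel set H ⊆ 2^ω × 2^ω such that every vertical section (H)_x is meager, and for every meager set A ⊆ 2^ω there exists x ∈ 2^ω with A ⊆ (H)_x. -/
/-!
Fix a countable basis of `X`. A point of Cantor space packs countably many codes, each naming a
set of basic open sets and hence an open set. The universal set's section at `x` is the union
of the complements of those coded open sets that are dense: a countable union of closed nowhere
dense sets, hence meagre. Density of a coded open set is a countable `∀∃` condition on the code,
which makes the whole set Borel. Conversely, a meagre set is covered by the complements of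
countably many dense open sets, and these are coded by a single point.
-/

open TopologicalSpace Set Function

lemma IsMeagre.exists_subset_iUnion_compl {X : Type*} [TopologicalSpace X] {A : Set X}
    (hA : IsMeagre A) :
    ∃ V : ℕ → Set X, (∀ n, IsOpen (V n) ∧ Dense (V n)) ∧ A ⊆ ⋃ n, (V n)ᶜ := by
  obtain ⟨S, hSo, hSd, hSc, hSA⟩ := mem_residual_iff.1 hA
  obtain ⟨V, hV⟩ := (hSc.insert univ).exists_eq_range (insert_nonempty _ _)
  refine ⟨V, fun n => ?_, ?_⟩
  · have : V n ∈ insert univ S := hV ▸ mem_range_self n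
    rcases this with h | h
    · exact h ▸ ⟨isOpen_univ, dense_univ⟩
    · exact ⟨hSo _ h, hSd _ h⟩
  · rw [← compl_iInter, subset_compl_comm, ← sInter_range, ← hV, sInter_insert]
    exact inter_subset_right.trans hSA

namespace MeagreUniversal

variable {X : Type*} [TopologicalSpace X] [SecondCountableTopology X]

def codedOpen (c : countableBasis X → Bool) : Set X := ⋃ (i) (_ : c i = true), (i : Set X)

lemma isOpen_codedOpen (c : countableBasis X → Bool) : IsOpen (codedOpen c) :=
  isOpen_biUnion fun i _ => isOpen_of_mem_countableBasis i.2

open Classical in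
lemma exists_codedOpen_eq {U : Set X} (hU : IsOpen U) : ∃ c, codedOpen c = U := by
  refine ⟨fun i => decide ((i : Set X) ⊆ U), ?_⟩
  conv_rhs => rw [(isBasis_countableBasis X).open_eq_sUnion' hU]
  ext y
  simp [codedOpen, and_comm, and_left_comm]

lemma dense_codedOpen_iff (c : countableBasis X → Bool) :
    Dense (codedOpen c) ↔ ∀ i : countableBasis X, (i : Set X).Nonempty →
      ∃ j, c j = true ∧ ((i : Set X) ∩ j).Nonempty := by
  simp [(isBasis_countableBasis X).dense_iff, codedOpen, inter_iUnion, nonempty_iUnion]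

lemma measurableSet_setOf_dense_codedOpen :
    MeasurableSet {c : countableBasis X → Bool | Dense (codedOpen c)} := by
  simp_rw [dense_codedOpen_iff]
  refine measurableSet_setOfPred.2 (Measurable.forall fun i => measurable_const.imp
    (Measurable.exists fun j => Measurable.and ?_ measurable_const))
  exact measurableSet_setOfPred.1 (measurableSet_eq_fun (measurable_pi_apply j) measurable_const)

lemma measurableSet_setOf_mem_codedOpen [MeasurableSpace X] [OpensMeasurableSpace X]
    {α : Type*} [MeasurableSpace α] {f : α → countableBasis X → Bool} (hf : Measurable f) :
    MeasurableSet {p : α × X | p.2 ∈ codedOpen (f p.1)} := by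
  have : {p : α × X | p.2 ∈ codedOpen (f p.1)} = ⋃ i, {a | f a i = true} ×ˢ (i : Set X) := by
    ext p; simp [codedOpen, and_comm]
  rw [this]
  exact MeasurableSet.iUnion fun i => MeasurableSet.prod
    ((measurable_pi_apply i).comp hf (measurableSet_singleton true))
    (isOpen_of_mem_countableBasis i.2).measurableSet

variable (X) in
noncomputable def subcode (x : ℕ → Bool) (n : ℕ) : countableBasis X → Bool :=
  fun i => x (Encodable.encode (n, i))

variable (X) in
def meagreUniversalSet : Set ((ℕ → Bool) × X) :=
  {p | ∃ n, Dense (codedOpen (subcode X p.1 n)) ∧ p.2 ∉ codedOpen (subcode X p.1 n)}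

lemma measurableSet_meagreUniversalSet [MeasurableSpace X] [OpensMeasurableSpace X] :
    MeasurableSet (meagreUniversalSet X) := by
  have hsub : ∀ n, Measurable fun x : ℕ → Bool => subcode X x n :=
    fun n => measurable_pi_lambda _ fun i => measurable_pi_apply _
  refine measurableSet_setOfPred.2
    (Measurable.exists fun n => Measurable.and ?_ (Measurable.not ?_))
  · exact measurableSet_setOfPred.1 (measurable_fst (hsub n measurableSet_setOf_dense_codedOpen))
  · exact measurableSet_setOfPred.1 (measurableSet_setOf_mem_codedOpen (hsub n))

lemma isMeagre_setOf_mem_meagreUniversalSet (x : ℕ → Bool) :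
    IsMeagre {y | (x, y) ∈ meagreUniversalSet X} := by
  have : {y | (x, y) ∈ meagreUniversalSet X} =
      ⋃ n, {y | Dense (codedOpen (subcode X x n)) ∧ y ∉ codedOpen (subcode X x n)} := by
    ext y; simp [meagreUniversalSet]
  rw [this]
  refine isMeagre_iUnion fun n => ?_
  by_cases hd : Dense (codedOpen (subcode X x n))
  · simp only [hd, true_and]
    rw [IsMeagre, ← compl_def, compl_compl]
    exact residual_of_dense_open (isOpen_codedOpen _) hd
  · simp [hd, IsMeagre.empty]

lemma _root_.IsMeagre.exists_subset_setOf_mem_meagreUniversalSet {A : Set X} (hA : IsMeagre A) :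
    ∃ x : ℕ → Bool, A ⊆ {y | (x, y) ∈ meagreUniversalSet X} := by
  obtain ⟨V, hV, hAV⟩ := hA.exists_subset_iUnion_compl
  choose c hc using fun n => exists_codedOpen_eq (hV n).1
  obtain ⟨x, hx⟩ := (Encodable.encode_injective (α := ℕ × countableBasis X)).surjective_comp_right
    fun p => c p.1 p.2
  have hsub : ∀ n, subcode X x n = c n := fun n => funext fun i => congrFun hx (n, i)
  refine ⟨x, fun y hy => ?_⟩
  obtain ⟨n, hn⟩ := mem_iUnion.1 (hAV hy)
  exact ⟨n, by rw [hsub, hc]; exact ⟨(hV n).2, hn⟩⟩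

end MeagreUniversal

open MeagreUniversal in
theorem exists_measurableSet_isMeagre_universal (X : Type*) [TopologicalSpace X]
    [SecondCountableTopology X] [MeasurableSpace X] [OpensMeasurableSpace X] :
    ∃ H : Set ((ℕ → Bool) × X), MeasurableSet H ∧
      (∀ x : ℕ → Bool, IsMeagre {y | (x, y) ∈ H}) ∧
      ∀ A : Set X, IsMeagre A → ∃ x : ℕ → Bool, A ⊆ {y | (x, y) ∈ H} :=
  ⟨meagreUniversalSet X, measurableSet_meagreUniversalSet, isMeagre_setOf_mem_meagreUniversalSet,
    fun _ hA => hA.exists_subset_setOf_mem_meagreUniversalSet⟩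

theorem exists_borel_meager_universal_set :
    ∃ H : Set ((ℕ → Bool) × (ℕ → Bool)), MeasurableSet H ∧
      (∀ x : ℕ → Bool, IsMeagre {y | (x, y) ∈ H}) ∧
      ∀ A : Set (ℕ → Bool), IsMeagre A →
        ∃ x : ℕ → Bool, A ⊆ {y | (x, y) ∈ H} :=
  exists_measurableSet_isMeagre_universal (ℕ → Bool)
end

section
/- For z ∈ 2^ω and f ∈ ω^ω with f(n) ≥ 1 for all n, let F(n) = Σ_{k≤n} f(k), and define B(z,f) = {t ∈ 2^ω : for all but finitely many n, there exists j ∈ [F(n), F(n+1)) with t(j) ≠ z(j)}. Then the family {B(z,f) : z ∈ 2^ω, f ∈ ω^ω} is a basis for the meager ideal on 2^ω: each B(z,f) is meager, and every meager set is contained in some B(z,f). -/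
/-- `F f n = Σ_{k ≤ n} f k`. -/
def Ftil (f : ℕ → ℕ) (n : ℕ) : ℕ := ∑ k ∈ Finset.range (n + 1), f k

/-- The basic meager set `B(z, f)`. -/
def Bset (z : ℕ → Bool) (f : ℕ → ℕ) : Set (ℕ → Bool) :=
  {t | ∀ᶠ n in Filter.atTop, ∃ j, Ftil f n ≤ j ∧ j < Ftil f (n + 1) ∧ t j ≠ z j}

/-!
Both halves concern blocks `[q n, q (n + 1))` of coordinates. A point `t` outside `B(z, f)`
copies `z` on infinitely many blocks. Copying `z` on some block beyond `N` is an open dense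
condition (change any point on one far-away block), so the complement of `B(z, f)` is a dense
`G_δ` and `B(z, f)` is meagre. Conversely, the complement of a meagre set contains the
intersection of an antitone sequence `V n` of dense open sets. Since there are only finitely many
prefixes of length `p`, some block `[p, q)` forces membership in `V n` whatever the prefix, so the
blocks and `z` can be built by recursion so that copying `z` on block `n` forces `t ∈ V n`. A point
copying `z` on infinitely many blocks then lies in every `V n`.
-/

open Filter Set Topology PiNat

theorem exists_forall_eq_on_blocks {α : Type*} {q : ℕ → ℕ} (hq : StrictMono q)
    (w : ℕ → ℕ → α) : ∃ z : ℕ → α, ∀ n j, q n ≤ j → j < q (n + 1) → z j = w n j := by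
  classical
  have hex (j : ℕ) : ∃ n, j < q (n + 1) := ⟨j, (Nat.lt_succ_self j).trans_le (hq.id_le _)⟩
  refine ⟨fun j => w (Nat.find (hex j)) j, fun n j h₁ h₂ => ?_⟩
  have : Nat.find (hex j) = n :=
    (Nat.find_eq_iff _).2 ⟨h₂, fun m hm => not_lt.2 ((hq.monotone hm).trans h₁)⟩
  simp only [this]

section CantorSpace

variable {α : Type*} [TopologicalSpace α] [DiscreteTopology α]

theorem isMeagre_setOf_eventually_exists_ne (z : ℕ → α) {q : ℕ → ℕ}
    (hq : Tendsto q atTop atTop) :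
    IsMeagre {t : ℕ → α | ∀ᶠ n in atTop, ∃ j, q n ≤ j ∧ j < q (n + 1) ∧ t j ≠ z j} := by
  set W : ℕ → Set (ℕ → α) := fun n =>
    ⋂ j ∈ Finset.Ico (q n) (q (n + 1)), (fun t => t j) ⁻¹' {z j}
  have mem_W {t n} : t ∈ W n ↔ ∀ j, q n ≤ j → j < q (n + 1) → t j = z j := by
    simp [W, and_imp]
  have hW_open (N : ℕ) : IsOpen (⋃ n ≥ N, W n) :=
    isOpen_biUnion fun n _ => isOpen_biInter_finset fun j _ =>
      (isOpen_discrete _).preimage (continuous_apply j)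
  -- Overwriting `t` by `z` on the `n`-th block converges to `t`, as the blocks escape to infinity.
  have hW_dense (N : ℕ) : Dense (⋃ n ≥ N, W n) := by
    intro t
    let u : ℕ → ℕ → α := fun n j => if q n ≤ j ∧ j < q (n + 1) then z j else t j
    refine mem_closure_of_tendsto (f := u) (b := atTop) (tendsto_pi_nhds.2 fun j => ?_) ?_
    · refine tendsto_const_nhds.congr' ((hq.eventually_gt_atTop j).mono fun n hn => ?_)
      simp [u, hn.not_ge]
    · filter_upwards [eventually_ge_atTop N] with n hn
      exact mem_biUnion hn (mem_W.2 fun j h₁ h₂ => if_pos ⟨h₁, h₂⟩)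
  refine mem_of_superset ((countable_iInter_mem.2 fun N =>
    residual_of_dense_open (hW_open N) (hW_dense N))) fun t ht hB => ?_
  obtain ⟨N, hN⟩ := eventually_atTop.1 hB
  obtain ⟨n, hn, htn⟩ := mem_iUnion₂.1 (mem_iInter.1 ht N)
  obtain ⟨j, h₁, h₂, hne⟩ := hN n hn
  exact hne (mem_W.1 htn j h₁ h₂)

theorem exists_mem_cylinder_cylinder_subset {U : Set (ℕ → α)} (hUo : IsOpen U) (hUd : Dense U)
    (s : ℕ → α) (m : ℕ) : ∃ u m', m ≤ m' ∧ u ∈ cylinder s m ∧ cylinder u m' ⊆ U := by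
  obtain ⟨u, hus, huU⟩ :=
    hUd.inter_open_nonempty _ (isOpen_cylinder _ s m) ⟨s, self_mem_cylinder s m⟩
  obtain ⟨_, ⟨x, n, rfl⟩, hux, hxU⟩ :=
    (isTopologicalBasis_cylinders fun _ => α).exists_subset_of_mem_open huU hUo
  refine ⟨u, max m n, le_max_left m n, hus, (cylinder_anti u (le_max_right m n)).trans ?_⟩
  rwa [mem_cylinder_iff_eq.1 hux]

theorem exists_block_forall_mem_of_prefixes [Nonempty α] {U : Set (ℕ → α)} (hUo : IsOpen U)
    (hUd : Dense U) (p : ℕ) (S : Finset (Fin p → α)) :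
    ∃ (w : ℕ → α) (q : ℕ), p ≤ q ∧ ∀ v ∈ S, ∀ t : ℕ → α, (∀ i : Fin p, t i = v i) →
      (∀ j, p ≤ j → j < q → t j = w j) → t ∈ U := by
  classical
  induction S using Finset.induction with
  | empty => exact ⟨fun _ => Classical.arbitrary _, p, le_rfl, by simp⟩
  | @insert v S _ ih =>
    obtain ⟨w, q, hpq, hw⟩ := ih
    let s : ℕ → α := fun j => if h : j < p then v ⟨j, h⟩ else w j
    obtain ⟨u, q', hqq', hus, huU⟩ := exists_mem_cylinder_cylinder_subset hUo hUd s q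
    refine ⟨u, q', hpq.trans hqq', fun v' hv' t htv htu => ?_⟩
    rcases Finset.mem_insert.1 hv' with rfl | hv'S
    · refine huU fun j hj => ?_
      by_cases hjp : j < p
      · rw [htv ⟨j, hjp⟩, hus j (hjp.trans_le hpq)]
        simp [s, hjp]
      · exact htu j (not_lt.1 hjp) hj
    · refine hw v' hv'S t htv fun j hpj hjq => ?_
      rw [htu j hpj (hjq.trans_le hqq'), hus j hjq]
      simp [s, not_lt.2 hpj]

theorem exists_block_forall_mem [Finite α] [Nonempty α] {U : Set (ℕ → α)} (hUo : IsOpen U)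
    (hUd : Dense U) (p : ℕ) : ∃ (w : ℕ → α) (q : ℕ), p < q ∧
      ∀ t : ℕ → α, (∀ j, p ≤ j → j < q → t j = w j) → t ∈ U := by
  have := Fintype.ofFinite α
  obtain ⟨w, q, hpq, hw⟩ := exists_block_forall_mem_of_prefixes hUo hUd p Finset.univ
  refine ⟨w, q + 1, Nat.lt_succ_of_le hpq, fun t ht => ?_⟩
  exact hw (fun i => t i) (Finset.mem_univ _) t (fun _ => rfl) fun j h₁ h₂ =>
    ht j h₁ (h₂.trans q.lt_succ_self)

theorem exists_blocks_forall_mem_of_antitone [Finite α] [Nonempty α] {V : ℕ → Set (ℕ → α)}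
    (hVo : ∀ n, IsOpen (V n)) (hVd : ∀ n, Dense (V n)) (hV : Antitone V) :
    ∃ (z : ℕ → α) (q : ℕ → ℕ), StrictMono q ∧ 0 < q 0 ∧ ∀ t : ℕ → α,
      (∃ᶠ n in atTop, ∀ j, q n ≤ j → j < q (n + 1) → t j = z j) → ∀ n, t ∈ V n := by
  choose W Q hQ hW using fun n => exists_block_forall_mem (hVo n) (hVd n)
  let q : ℕ → ℕ := fun n => Nat.rec 1 (fun k p => Q k p) n
  have hq : StrictMono q := strictMono_nat_of_lt_succ fun n => hQ n (q n)
  obtain ⟨z, hz⟩ := exists_forall_eq_on_blocks hq fun n => W n (q n)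
  refine ⟨z, q, hq, Nat.one_pos, fun t ht n => ?_⟩
  obtain ⟨m, hnm, hm⟩ := frequently_atTop.1 ht n
  exact hV hnm (hW m (q m) t fun j h₁ h₂ => (hm j h₁ h₂).trans (hz m j h₁ h₂))

end CantorSpace

theorem exists_antitone_isOpen_dense_subset_of_mem_residual {X : Type*} [TopologicalSpace X]
    [BaireSpace X] {s : Set X} (hs : s ∈ residual X) :
    ∃ V : ℕ → Set X, Antitone V ∧ (∀ n, IsOpen (V n)) ∧ (∀ n, Dense (V n)) ∧ ⋂ n, V n ⊆ s := by
  obtain ⟨t, hts, htG, htd⟩ := mem_residual.1 hs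
  obtain ⟨U, hUo, rfl⟩ := isGδ_iff_eq_iInter_nat.1 htG
  refine ⟨fun n => ⋂ i ∈ Iic n, U i,
    fun m n hmn => biInter_mono (Iic_subset_Iic.2 hmn) fun _ _ => subset_rfl,
    fun n => (finite_Iic n).isOpen_biInter fun i _ => hUo i,
    fun n => htd.mono (subset_iInter₂ fun i _ => iInter_subset U i),
    (iInter_mono fun n => biInter_subset_of_mem self_mem_Iic).trans hts⟩

theorem exists_Ftil_eq {q : ℕ → ℕ} (hq : StrictMono q) (h0 : 0 < q 0) :
    ∃ f : ℕ → ℕ, (∀ n, 1 ≤ f n) ∧ Ftil f = q := by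
  refine ⟨fun | 0 => q 0 | n + 1 => q (n + 1) - q n, ?_, funext fun n => ?_⟩
  · rintro (_ | n)
    · exact h0
    · have := hq (Nat.lt_add_one n)
      dsimp only
      omega
  · induction n with
    | zero => simp [Ftil]
    | succ n ih =>
      rw [Ftil, Finset.sum_range_succ, ← Ftil, ih]
      have := hq (Nat.lt_add_one n)
      dsimp only
      omega

theorem tendsto_Ftil_atTop {f : ℕ → ℕ} (hf : ∀ n, 1 ≤ f n) : Tendsto (Ftil f) atTop atTop := by
  refine tendsto_atTop_mono (fun n => ?_) (tendsto_add_atTop_nat 1)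
  calc n + 1 = ∑ _k ∈ Finset.range (n + 1), 1 := by simp
    _ ≤ Ftil f n := Finset.sum_le_sum fun k _ => hf k

theorem Bset_basis_of_meager_ideal :
    (∀ (z : ℕ → Bool) (f : ℕ → ℕ), (∀ n, 1 ≤ f n) → IsMeagre (Bset z f)) ∧
    (∀ A : Set (ℕ → Bool), IsMeagre A →
      ∃ (z : ℕ → Bool) (f : ℕ → ℕ), (∀ n, 1 ≤ f n) ∧ A ⊆ Bset z f) := by
  refine ⟨fun z f hf => isMeagre_setOf_eventually_exists_ne z (tendsto_Ftil_atTop hf),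
    fun A hA => ?_⟩
  obtain ⟨V, hV, hVo, hVd, hVA⟩ := exists_antitone_isOpen_dense_subset_of_mem_residual hA
  obtain ⟨z, q, hq, hq0, hzq⟩ := exists_blocks_forall_mem_of_antitone hVo hVd hV
  obtain ⟨f, hf, rfl⟩ := exists_Ftil_eq hq hq0
  refine ⟨z, f, hf, fun t htA => by_contra fun htB => ?_⟩
  have : ∃ᶠ n in atTop, ∀ j, Ftil f n ≤ j → j < Ftil f (n + 1) → t j = z j := by
    simpa only [Bset, mem_ofPred_eq, not_eventually, not_exists, not_and, ne_eq, not_not]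
      using htB
  exact hVA (mem_iInter.2 (hzq t this)) htA
end

section
/- cf(cov(ℳ)) ≥ add(R), where ℳ is the meager ideal on 2^ω, cov(ℳ) is the least cardinality of a family of meager sets covering 2^ω, R is the collection of R sets, and add(R) is the least cardinality of a family of R sets whose union is not an R set. -/
open Cardinal

/-- The covering number of the meager ideal on `2^ω`. -/
noncomputable def covMeager : Cardinal :=
  sInf {c : Cardinal | ∃ 𝒜 : Set (Set (ℕ → Bool)),
    (∀ A ∈ 𝒜, IsMeagre A) ∧ ⋃₀ 𝒜 = Set.univ ∧ #𝒜 = c}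

/-- The additivity of the ideal of R sets. -/
noncomputable def addR : Cardinal :=
  sInf {c : Cardinal | ∃ 𝒜 : Set (Set (ℕ → Bool)),
    (∀ A ∈ 𝒜, RSet A) ∧ ¬ RSet (⋃₀ 𝒜) ∧ #𝒜 = c}

/-!
Let `κ = cov(ℳ)`. Fewer than `κ` meagre sections never cover `2^ω`, so every set of size `< κ`
is an R set. On the other hand there is a Borel set `U ⊆ 2^ω × 2^ω` with meagre sections such
that every meagre set lies in one of its sections: a code consists of windows `[n, f n)` and
patterns `τ n`, and its section is the set of reals that eventually disagree with `τ n`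
somewhere on the `n`-th window. Cover `2^ω` by meagre sets `A_α` (`α < κ`) with codes `x_α`, and
cut `κ` along a cofinal set `S`: each `{x_α | α ≤ s}` with `s ∈ S` has size `< κ`, so it is an
R set, while their union is not, since its `U`-sections cover `2^ω`.
-/

open Set Filter PiNat

namespace PiNat

variable {E : ℕ → Type*} [∀ n, TopologicalSpace (E n)] [∀ n, DiscreteTopology (E n)]

theorem exists_cylinder_subset {O : Set (∀ n, E n)} (hO : IsOpen O) {x : ∀ n, E n}
    (hx : x ∈ O) : ∃ m, cylinder x m ⊆ O := by
  obtain ⟨_, ⟨y, m, rfl⟩, hxy, hsub⟩ :=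
    (isTopologicalBasis_cylinders E).exists_subset_of_mem_open hx hO
  exact ⟨m, (mem_cylinder_iff_eq.1 hxy).symm ▸ hsub⟩

theorem dense_of_forall_cylinder_inter_nonempty {D : Set (∀ n, E n)}
    (h : ∀ x m, (cylinder x m ∩ D).Nonempty) : Dense D := by
  refine dense_iff_inter_open.2 fun O hO ⟨x, hx⟩ => ?_
  obtain ⟨m, hm⟩ := exists_cylinder_subset hO hx
  exact (h x m).mono (inter_subset_inter_left _ hm)

theorem isNowhereDense_singleton [∀ n, Nontrivial (E n)] (x : ∀ n, E n) :
    IsNowhereDense ({x} : Set (∀ n, E n)) := by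
  rw [isClosed_singleton.isNowhereDense_iff, eq_empty_iff_forall_notMem]
  intro y hy
  obtain ⟨m, hm⟩ := exists_cylinder_subset isOpen_interior hy
  obtain ⟨e, he⟩ := exists_ne (y m)
  have hupd : Function.update y m e = x :=
    mem_singleton_iff.1 (interior_subset (hm (update_mem_cylinder y m e)))
  have hy : y = x := mem_singleton_iff.1 (interior_subset (hm (self_mem_cylinder y m)))
  exact he (Function.update_eq_self_iff.1 (hupd.trans hy.symm))

end PiNat

section Escape

variable {α : Type*}

def splice {a : ℕ} (s : Fin a → α) (w : ℕ → α) : ℕ → α :=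
  fun k => if h : k < a then s ⟨k, h⟩ else w k

variable [TopologicalSpace α]

theorem continuous_splice {a : ℕ} (s : Fin a → α) : Continuous (splice s) :=
  continuous_pi fun k => by
    unfold splice
    split_ifs
    exacts [continuous_const, continuous_apply k]

variable [DiscreteTopology α]

theorem dense_splice_preimage {U : Set (ℕ → α)} (hd : Dense U) {a : ℕ}
    (s : Fin a → α) : Dense (splice s ⁻¹' U) := by
  refine dense_of_forall_cylinder_inter_nonempty fun z m => ?_
  obtain ⟨v, hv, hvU⟩ := hd.inter_open_nonempty (cylinder (splice s z) (max a m))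
    (isOpen_cylinder _ _ _) ⟨_, self_mem_cylinder _ _⟩
  rw [mem_cylinder_iff] at hv
  refine ⟨fun k => if k < a then z k else v k, mem_cylinder_iff.2 fun i hi => ?_, ?_⟩
  · split_ifs with h
    · rfl
    · simp [hv i (lt_max_of_lt_right hi), splice, h]
  · have hsplice : splice s (fun k => if k < a then z k else v k) = v := by
      funext k
      by_cases h : k < a
      · simp [splice, h, hv k (lt_max_of_lt_left h)]
      · simp [splice, h]
    rwa [mem_preimage, hsplice]

variable [Finite α] [Nonempty α]

theorem exists_window_subset {U : Set (ℕ → α)} (hU : IsOpen U) (hd : Dense U) (a : ℕ) :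
    ∃ b, ∃ τ : ℕ → α, {y | ∀ k ∈ Ico a b, y k = τ k} ⊆ U := by
  -- Intersecting over all prefixes of length `a` makes a single window `[a, b)` work for every `y`.
  set G := ⋂ s : Fin a → α, splice s ⁻¹' U
  have hGo : ∀ s : Fin a → α, IsOpen (splice s ⁻¹' U) := fun s =>
    hU.preimage (continuous_splice s)
  have hG : Dense G := dense_iInter_of_isOpen hGo fun s => dense_splice_preimage hd s
  obtain ⟨w, hw⟩ := hG.nonempty
  obtain ⟨b, hb⟩ := exists_cylinder_subset (isOpen_iInter_of_finite hGo) hw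
  refine ⟨b, w, fun y hy => ?_⟩
  have hyw : (fun k => if k < a then w k else y k) ∈ G := hb <| mem_cylinder_iff.2 fun i hi => by
    split_ifs with h
    · rfl
    · exact hy i ⟨not_lt.1 h, hi⟩
  have hsplice : splice (fun i : Fin a => y i) (fun k => if k < a then w k else y k) = y := by
    funext k
    by_cases h : k < a <;> simp [splice, h]
  simpa [hsplice] using mem_iInter.1 hyw (fun i => y i)

end Escape

theorem IsMeagre.exists_antitone_isOpen_dense {X : Type*} [TopologicalSpace X] [BaireSpace X]
    {M : Set X} (hM : IsMeagre M) : ∃ W : ℕ → Set X,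
      (∀ n, IsOpen (W n)) ∧ (∀ n, Dense (W n)) ∧ Antitone W ∧ M ⊆ (⋂ n, W n)ᶜ := by
  obtain ⟨S, hSo, hSd, hSc, hSM⟩ := mem_residual_iff.1 hM
  obtain ⟨D, hD⟩ := (hSc.insert Set.univ).exists_eq_range (insert_nonempty _ _)
  have hDS : ∀ i, D i = Set.univ ∨ D i ∈ S := fun i =>
    (hD ▸ mem_range_self i : D i ∈ insert Set.univ S)
  have hDo : ∀ i, IsOpen (D i) := fun i => (hDS i).elim (· ▸ isOpen_univ) (hSo _)
  have hDd : ∀ i, Dense (D i) := fun i => (hDS i).elim (· ▸ dense_univ) (hSd _)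
  refine ⟨fun n => ⋂ i ∈ Iic n, D i, fun n => (finite_Iic n).isOpen_biInter fun i _ => hDo i,
    fun n => dense_biInter_of_isOpen (fun i _ => hDo i) (finite_Iic n).countable
      fun i _ => hDd i,
    fun m n hmn => biInter_subset_biInter_left (Iic_subset_Iic.2 hmn), ?_⟩
  refine subset_compl_comm.1 fun y hy => hSM fun t ht => ?_
  obtain ⟨i, rfl⟩ : t ∈ range D := hD ▸ mem_insert_of_mem _ ht
  exact mem_iInter₂.1 (mem_iInter.1 hy i) i self_mem_Iic

section Mismatch

variable {α : Type*} [TopologicalSpace α] [DiscreteTopology α]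

-- The windows start at `n`, so every `f` gives a meagre set: no interval partition is needed.
def eventuallyMismatch (f : ℕ → ℕ) (τ : ℕ → ℕ → α) : Set (ℕ → α) :=
  {y | ∀ᶠ n in atTop, ∃ k ∈ Ico n (f n), y k ≠ τ n k}

theorem isMeagre_eventuallyMismatch (f : ℕ → ℕ) (τ : ℕ → ℕ → α) :
    IsMeagre (eventuallyMismatch f τ) := by
  have hunion : eventuallyMismatch f τ =
      ⋃ N, {y | ∀ n ≥ N, ∃ k ∈ Ico n (f n), y k ≠ τ n k} := by
    ext y
    simp [eventuallyMismatch, eventually_atTop]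
  rw [hunion]
  refine isMeagre_iUnion fun N => IsNowhereDense.isMeagre ?_
  rw [IsNowhereDense, interior_eq_empty_iff_dense_compl, ← interior_compl]
  refine dense_of_forall_cylinder_inter_nonempty fun x m => ?_
  set n := max N m
  refine ⟨fun k => if k < m then x k else τ n k, mem_cylinder_iff.2 fun i hi => if_pos hi, ?_⟩
  refine mem_interior.2 ⟨cylinder _ (f n), fun v hv hvS => ?_, isOpen_cylinder _ _ _,
    self_mem_cylinder _ _⟩
  obtain ⟨k, hk, hne⟩ := hvS n (le_max_left N m)
  have hmk : ¬k < m := not_lt.2 ((le_max_right N m).trans hk.1)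
  exact hne (by simp [mem_cylinder_iff.1 hv k hk.2, hmk])

theorem exists_subset_eventuallyMismatch [Finite α] [Nonempty α] {M : Set (ℕ → α)}
    (hM : IsMeagre M) : ∃ f τ, M ⊆ eventuallyMismatch f τ := by
  obtain ⟨W, hWo, hWd, hWanti, hMW⟩ := hM.exists_antitone_isOpen_dense
  choose f τ hfτ using fun n => exists_window_subset (hWo n) (hWd n) n
  refine ⟨f, τ, fun y hy => ?_⟩
  obtain ⟨i, hi⟩ : ∃ i, y ∉ W i := by simpa using hMW hy
  filter_upwards [eventually_ge_atTop i] with n hn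
  by_contra! hagree
  exact hi (hWanti hn (hfτ n hagree))

end Mismatch

theorem measurableSet_eventuallyMismatch :
    MeasurableSet {p : ((ℕ → ℕ) × (ℕ → ℕ → Bool)) × (ℕ → Bool) |
      p.2 ∈ eventuallyMismatch p.1.1 p.1.2} := by
  simp only [eventuallyMismatch, eventually_atTop, ofPred_exists, ofPred_forall]
  measurability

theorem not_countable_nat_bool : ¬ Countable (ℕ → Bool) := by
  rw [← mk_le_aleph0_iff, not_le]
  simpa using cantor ℵ₀

def IsUniversalMeagre (H : Set ((ℕ → Bool) × (ℕ → Bool))) : Prop :=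
  MeasurableSet H ∧ (∀ x, IsMeagre {y | (x, y) ∈ H}) ∧
    ∀ M, IsMeagre M → ∃ x, M ⊆ {y | (x, y) ∈ H}

theorem exists_isUniversalMeagre : ∃ H, IsUniversalMeagre H := by
  have hcode : ¬ Countable ((ℕ → ℕ) × (ℕ → ℕ → Bool)) := fun _ =>
    not_countable_nat_bool <| Function.Injective.countable
      (f := fun y : ℕ → Bool => ((0 : ℕ → ℕ), fun _ : ℕ => y))
      fun _ _ h => congrFun (congrArg Prod.snd h) 0
  let e := PolishSpace.measurableEquivOfNotCountable not_countable_nat_bool hcode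
  refine ⟨{p | p.2 ∈ eventuallyMismatch (e p.1).1 (e p.1).2},
    measurableSet_eventuallyMismatch.preimage (e.measurable.prodMap measurable_id),
    fun x => isMeagre_eventuallyMismatch (e x).1 (e x).2, fun M hM => ?_⟩
  obtain ⟨f, τ, hM⟩ := exists_subset_eventuallyMismatch hM
  exact ⟨e.symm (f, τ), by simpa using hM⟩

theorem exists_sUnion_eq_univ_mk_le_cof (α : Type*) (hα : ℵ₀ ≤ #α) :
    ∃ 𝒮 : Set (Set α), #𝒮 ≤ (#α).ord.cof ∧ (∀ B ∈ 𝒮, #B < #α) ∧ ⋃₀ 𝒮 = Set.univ := by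
  obtain ⟨_, _, hord⟩ := exists_ord_eq_type_lt α
  obtain ⟨S, hS, hcard⟩ := Order.exists_cof_eq α
  refine ⟨Iic '' S, ?_, ?_, ?_⟩
  · rw [hord, Ordinal.cof_type, ← hcard]
    exact mk_image_le
  · rintro _ ⟨s, -, rfl⟩
    exact mk_Iic_lt s hord hα
  · rwa [sUnion_image, ← isCofinal_iff_iUnion_Iic_eq_univ]

theorem covMeager_le_mk {𝒜 : Set (Set (ℕ → Bool))} (hM : ∀ A ∈ 𝒜, IsMeagre A)
    (hcov : ⋃₀ 𝒜 = Set.univ) : covMeager ≤ #𝒜 :=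
  csInf_le' ⟨𝒜, hM, hcov, rfl⟩

theorem addR_le_mk {𝒳 : Set (Set (ℕ → Bool))} (hR : ∀ X ∈ 𝒳, RSet X) (hnR : ¬ RSet (⋃₀ 𝒳)) :
    addR ≤ #𝒳 :=
  csInf_le' ⟨𝒳, hR, hnR, rfl⟩

theorem exists_meagre_cover_mk_eq_covMeager : ∃ 𝒜 : Set (Set (ℕ → Bool)),
    (∀ A ∈ 𝒜, IsMeagre A) ∧ ⋃₀ 𝒜 = Set.univ ∧ #𝒜 = covMeager :=
  csInf_mem (s := {c | ∃ 𝒜 : Set (Set (ℕ → Bool)),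
      (∀ A ∈ 𝒜, IsMeagre A) ∧ ⋃₀ 𝒜 = Set.univ ∧ #𝒜 = c})
    ⟨_, range singleton, forall_mem_range.2 fun y => (isNowhereDense_singleton y).isMeagre,
      sUnion_eq_univ_iff.2 fun y => ⟨{y}, mem_range_self y, rfl⟩, rfl⟩

theorem aleph0_le_covMeager : ℵ₀ ≤ covMeager := by
  obtain ⟨𝒜, hM, hcov, hcard⟩ := exists_meagre_cover_mk_eq_covMeager
  refine hcard ▸ le_of_not_gt fun hfin =>
    not_isMeagre_of_isOpen (X := ℕ → Bool) isOpen_univ univ_nonempty ?_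
  rw [← hcov, sUnion_eq_biUnion]
  exact isMeagre_biUnion (lt_aleph0_iff_set_finite.1 hfin).countable hM

theorem rSet_of_mk_lt_covMeager {X : Set (ℕ → Bool)} (hX : #X < covMeager) : RSet X := by
  intro H _ hsec hcov
  refine ((covMeager_le_mk (𝒜 := (fun x => {y | (x, y) ∈ H}) '' X) ?_ ?_).trans
    mk_image_le).not_gt hX
  · rintro _ ⟨x, -, rfl⟩
    exact hsec x
  · rwa [sUnion_image]

theorem not_rSet_of_forall_subset_section {H : Set ((ℕ → Bool) × (ℕ → Bool))}
    (hH : MeasurableSet H) (hsec : ∀ x, IsMeagre {y | (x, y) ∈ H})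
    {𝒜 : Set (Set (ℕ → Bool))} (hcov : ⋃₀ 𝒜 = Set.univ) {X : Set (ℕ → Bool)}
    (hX : ∀ A ∈ 𝒜, ∃ x ∈ X, A ⊆ {y | (x, y) ∈ H}) : ¬ RSet X := by
  intro hR
  refine hR H hH hsec (eq_univ_of_univ_subset (hcov ▸ sUnion_subset fun A hA => ?_))
  obtain ⟨x, hx, hAx⟩ := hX A hA
  exact hAx.trans (subset_biUnion_of_mem (u := fun x => {y | (x, y) ∈ H}) hx)

theorem addR_le_cof_covMeager : addR ≤ covMeager.ord.cof := by
  obtain ⟨H, hHm, hHsec, hHuniv⟩ := exists_isUniversalMeagre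
  obtain ⟨𝒜, h𝒜, hcov, hcard⟩ := exists_meagre_cover_mk_eq_covMeager
  choose c hc using fun A : 𝒜 => hHuniv A (h𝒜 A A.2)
  obtain ⟨𝒮, h𝒮card, h𝒮small, h𝒮cov⟩ :=
    exists_sUnion_eq_univ_mk_le_cof 𝒜 (hcard ▸ aleph0_le_covMeager)
  calc addR ≤ #(image c '' 𝒮) := addR_le_mk ?_ ?_
    _ ≤ #𝒮 := mk_image_le
    _ ≤ covMeager.ord.cof := hcard ▸ h𝒮card
  · rintro _ ⟨B, hB, rfl⟩
    exact rSet_of_mk_lt_covMeager (mk_image_le.trans_lt (hcard ▸ h𝒮small B hB))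
  · rw [← image_sUnion, h𝒮cov, image_univ]
    exact not_rSet_of_forall_subset_section hHm hHsec hcov fun A hA =>
      ⟨c ⟨A, hA⟩, mem_range_self _, hc ⟨A, hA⟩⟩
end
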